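/- arXiv:1411.3271 — 8 statements merged into one kernel-verified Lean document; each statement's English description precedes it below -/
import Mathlib

section
/- For α > 2 and any constant c > 0, B'(2/α, 1 - 2/α, 1/(1+cβ)) = (cβ)^{1-2/α}/(1 - 2/α) + o(β^{1-2/α}) as β → 0⁺. -/
open MeasureTheory Real Filter Asymptotics

/-- Complementary incomplete Beta function B'(a,b,z) = ∫_z^1 u^{a-1}(1-u)^{b-1} du. -/
noncomputable def Bcomp (a b z : ℝ) : ℝ := ∫ u in z..(1:ℝ), u ^ (a - 1) * (1 - u) ^ (b - 1)

/-!
For `a ≤ 1` the factor `u ^ (a - 1)` lies between `1` and `z ^ (a - 1)` on `[z, 1]`, so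
`B'(a, b, z)` is squeezed between `(1 - z) ^ b / b` and `z ^ (a - 1) (1 - z) ^ b / b`.
With `a = 1 - b` and `z = 1 / (1 + t)` these bounds are `t ^ b z ^ b / b` and `t ^ b / b`, whose
ratio tends to `1` as `t → 0⁺`; the theorem is this estimate at `t = c β`.
-/

open Set Topology

lemma integral_one_sub_rpow {b : ℝ} (hb : 0 < b) (z : ℝ) :
    ∫ u in z..1, (1 - u) ^ (b - 1) = (1 - z) ^ b / b := by
  rw [intervalIntegral.integral_comp_sub_left (fun t : ℝ => t ^ (b - 1)), sub_self,
    integral_rpow (Or.inl (by linarith)), sub_add_cancel, zero_rpow hb.ne', sub_zero]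

lemma intervalIntegrable_one_sub_rpow {b : ℝ} (hb : 0 < b) (z : ℝ) :
    IntervalIntegrable (fun u : ℝ => (1 - u) ^ (b - 1)) volume z 1 := by
  simpa using (intervalIntegral.intervalIntegrable_rpow' (a := 1 - z) (b := 0)
    (by linarith : -1 < b - 1)).comp_sub_left 1

lemma intervalIntegrable_Bcomp_integrand (a : ℝ) {b z : ℝ} (hb : 0 < b) (hz : 0 < z)
    (hz1 : z ≤ 1) :
    IntervalIntegrable (fun u : ℝ => u ^ (a - 1) * (1 - u) ^ (b - 1)) volume z 1 := by
  refine (intervalIntegrable_one_sub_rpow hb z).continuousOn_mul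
    (continuousOn_id.rpow_const fun u hu => Or.inl ?_)
  rw [uIcc_of_le hz1] at hu
  exact (hz.trans_le hu.1).ne'

lemma one_sub_rpow_div_le_Bcomp {a b z : ℝ} (ha : a ≤ 1) (hb : 0 < b) (hz : 0 < z)
    (hz1 : z ≤ 1) : (1 - z) ^ b / b ≤ Bcomp a b z := by
  rw [← integral_one_sub_rpow hb]
  refine intervalIntegral.integral_mono_on hz1 (intervalIntegrable_one_sub_rpow hb z)
    (intervalIntegrable_Bcomp_integrand a hb hz hz1) fun u ⟨hzu, hu1⟩ => ?_
  exact le_mul_of_one_le_left (rpow_nonneg (by linarith) _)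
    (one_le_rpow_of_pos_of_le_one_of_nonpos (hz.trans_le hzu) hu1 (by linarith))

lemma Bcomp_le_rpow_mul {a b z : ℝ} (ha : a ≤ 1) (hb : 0 < b) (hz : 0 < z)
    (hz1 : z ≤ 1) : Bcomp a b z ≤ z ^ (a - 1) * ((1 - z) ^ b / b) := by
  rw [← integral_one_sub_rpow hb, ← intervalIntegral.integral_const_mul]
  refine intervalIntegral.integral_mono_on hz1 (intervalIntegrable_Bcomp_integrand a hb hz hz1)
    ((intervalIntegrable_one_sub_rpow hb z).const_mul _) fun u ⟨hzu, _⟩ => ?_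
  exact mul_le_mul_of_nonneg_right (rpow_le_rpow_of_nonpos hz hzu (by linarith))
    (rpow_nonneg (by linarith) _)

lemma abs_Bcomp_one_sub_sub_rpow_le {b t : ℝ} (hb : 0 < b) (ht : 0 < t) :
    |Bcomp (1 - b) b (1 / (1 + t)) - t ^ b / b| ≤ (1 - (1 / (1 + t)) ^ b) / b * t ^ b := by
  set z := 1 / (1 + t) with hz_def
  have hz : 0 < z := by positivity
  have hz1 : z ≤ 1 := by rw [hz_def, div_le_one (by linarith)]; linarith
  have h1z : (1 - z) ^ b = t ^ b * z ^ b := by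
    rw [← mul_rpow ht.le hz.le, hz_def, mul_one_div, one_sub_div (by positivity),
      add_sub_cancel_left]
  have hzb : z ^ (1 - b - 1) * z ^ b = 1 := by
    rw [← rpow_add hz, sub_sub_cancel_left, neg_add_cancel, rpow_zero]
  have hlo := one_sub_rpow_div_le_Bcomp (a := 1 - b) (by linarith) hb hz hz1
  have hhi := Bcomp_le_rpow_mul (a := 1 - b) (by linarith) hb hz hz1
  rw [h1z] at hlo hhi
  have hzb1 : z ^ b ≤ 1 := rpow_le_one hz.le hz1 hb.le
  have htb : 0 ≤ t ^ b := rpow_nonneg ht.le b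
  rw [abs_le]
  constructor
  · calc -((1 - z ^ b) / b * t ^ b) = t ^ b * z ^ b / b - t ^ b / b := by ring
      _ ≤ Bcomp (1 - b) b z - t ^ b / b := by gcongr
  · calc Bcomp (1 - b) b z - t ^ b / b
        ≤ z ^ (1 - b - 1) * (t ^ b * z ^ b / b) - t ^ b / b := by gcongr
      _ = (z ^ (1 - b - 1) * z ^ b) * (t ^ b / b) - t ^ b / b := by ring
      _ = 0 := by rw [hzb]; ring
      _ ≤ (1 - z ^ b) / b * t ^ b := by
        have : 0 ≤ 1 - z ^ b := by linarith
        positivity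

theorem Bcomp_one_sub_sub_rpow_isLittleO {b : ℝ} (hb : 0 < b) :
    (fun t : ℝ => Bcomp (1 - b) b (1 / (1 + t)) - t ^ b / b) =o[𝓝[>] 0] fun t => t ^ b := by
  set φ : ℝ → ℝ := fun t => (1 - (1 / (1 + t)) ^ b) / b
  have hφ : Tendsto φ (𝓝[>] 0) (𝓝 0) := by
    have : ContinuousAt φ 0 := by
      refine ((continuousAt_const.sub (ContinuousAt.rpow_const ?_ (Or.inl ?_))).div_const b)
      · exact continuousAt_const.div (by fun_prop) (by norm_num)
      · norm_num
    simpa [φ] using this.tendsto.mono_left nhdsWithin_le_nhds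
  refine IsBigO.trans_isLittleO (g := φ * fun t => t ^ b) (IsBigO.of_bound' ?_)
    (isLittleO_iff_exists_eq_mul.2 ⟨φ, hφ, EventuallyEq.rfl⟩)
  filter_upwards [self_mem_nhdsWithin] with t (ht : 0 < t)
  have hφt : 0 ≤ φ t * t ^ b := by
    have : (1 / (1 + t)) ^ b ≤ 1 :=
      rpow_le_one (by positivity) ((div_le_one (by linarith)).2 (by linarith)) hb.le
    have : 0 ≤ 1 - (1 / (1 + t)) ^ b := by linarith
    positivity
  rw [Real.norm_eq_abs, Pi.mul_apply, Real.norm_eq_abs, abs_of_nonneg hφt]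
  exact abs_Bcomp_one_sub_sub_rpow_le hb ht

/-- For α > 2, c > 0: B'(2/α, 1-2/α, 1/(1+cβ)) = (cβ)^{1-2/α}/(1-2/α) + o(β^{1-2/α}) as β → 0⁺. -/
theorem stmt1 (α c : ℝ) (hα : 2 < α) (hc : 0 < c) :
    (fun β : ℝ => Bcomp (2 / α) (1 - 2 / α) (1 / (1 + c * β))
        - (c * β) ^ (1 - 2 / α) / (1 - 2 / α))
      =o[nhdsWithin 0 (Set.Ioi 0)] fun β : ℝ => β ^ (1 - 2 / α) := by
  set b := 1 - 2 / α
  have hb : 0 < b := by rw [sub_pos, div_lt_one (by linarith)]; exact hα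
  have hscale : Tendsto (c * ·) (𝓝[>] 0) (𝓝[>] 0) :=
    tendsto_iff_comap.2 (comap_mulLeft_nhdsGT_zero hc).ge
  have hscaled := (Bcomp_one_sub_sub_rpow_isLittleO hb).comp_tendsto hscale
  rw [sub_sub_cancel] at hscaled
  refine hscaled.trans_isBigO ((isBigO_const_mul_self (c ^ b) (fun β : ℝ => β ^ b) _).congr' ?_
    EventuallyEq.rfl)
  filter_upwards [self_mem_nhdsWithin] with β (hβ : 0 < β)
  exact (mul_rpow hc.le hβ.le).symm
end

section
/- Let G ~ Gamma(M,1) be independent of two independent nonnegative random variables I₁, I₂ with Laplace transforms L₁, L₂ each M-1 times differentiable. Then Pr(G > β(c₁I₁ + c₂I₂)) = Σ_{n=0}^{M-1} ((-β)^n/n!) Σ_{n₁=0}^{n} C(n,n₁) c₁^{n₁} c₂^{n-n₁} L₁^{(n₁)}(βc₁) L₂^{(n-n₁)}(βc₂), for any constants c₁, c₂ > 0. -/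
/-! Since `T = β(c₁I₁ + c₂I₂)` is independent of `G`, `P(G > T) = E[F(T)]`, where
`F(t) = ∑_{n<M} tⁿ e^{-t} / n!` is the survival function of `Gamma(M,1)`. Expanding
`(βc₁I₁ + βc₂I₂)ⁿ` binomially, `e^{-T}` factors, and independence of `I₁, I₂` splits every term
into moments `E[(sI)ᵏ e^{-sI}] = (-s)ᵏ L⁽ᵏ⁾(s)`. That identity comes from differentiating under the
integral sign at parameters beyond `s`, followed by a limit at `s` itself, where only
integrability is known. -/

open MeasureTheory Real Filter Topology ProbabilityTheory Set

noncomputable def erlangSurvival (M : ℕ) (t : ℝ) : ℝ :=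
  ∑ n ∈ Finset.range M, t ^ n * exp (-t) / n.factorial

lemma hasDerivAt_erlangSurvival (K : ℕ) (t : ℝ) :
    HasDerivAt (erlangSurvival (K + 1)) (-(t ^ K * exp (-t) / K.factorial)) t := by
  induction K with
  | zero =>
    unfold erlangSurvival
    simpa using (hasDerivAt_neg t).exp
  | succ K ih =>
    have hterm : HasDerivAt (fun u => u ^ (K + 1) * exp (-u) / (K + 1).factorial)
        (t ^ K * exp (-t) / K.factorial - t ^ (K + 1) * exp (-t) / (K + 1).factorial) t := by
      refine (((hasDerivAt_pow (K + 1) t).mul (hasDerivAt_neg t).exp).div_const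
        ((K + 1).factorial : ℝ)).congr_deriv ?_
      rw [Nat.factorial_succ]
      push_cast
      field_simp
      ring
    have hsplit : erlangSurvival (K + 2)
        = fun u => erlangSurvival (K + 1) u + u ^ (K + 1) * exp (-u) / (K + 1).factorial := by
      funext u
      simp only [erlangSurvival, Finset.sum_range_succ _ (K + 1)]
    rw [hsplit]
    exact (ih.add hterm).congr_deriv (by ring)

lemma tendsto_erlangSurvival_atTop (M : ℕ) : Tendsto (erlangSurvival M) atTop (𝓝 0) := by
  unfold erlangSurvival
  simpa using tendsto_finsetSum (Finset.range M) fun n _ =>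
    (tendsto_pow_mul_exp_neg_atTop_nhds_zero n).div_const (n.factorial : ℝ)

lemma integrableOn_Ioi_pow_mul_exp_neg (K : ℕ) (t : ℝ) :
    IntegrableOn (fun x => x ^ K * exp (-x)) (Ioi t) := by
  refine integrable_of_isBigO_exp_neg one_half_pos (by fun_prop) ?_
  simpa [mul_comm, Real.rpow_natCast] using (Gamma_integrand_isLittleO K).isBigO

lemma integral_Ioi_pow_mul_exp_neg_div_factorial (K : ℕ) (t : ℝ) :
    ∫ x in Ioi t, x ^ K * exp (-x) / K.factorial = erlangSurvival (K + 1) t := by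
  have h := integral_Ioi_of_hasDerivAt_of_tendsto' (fun x _ => hasDerivAt_erlangSurvival K x)
    ((integrableOn_Ioi_pow_mul_exp_neg K t).div_const _).neg (tendsto_erlangSurvival_atTop _)
  rw [integral_neg] at h
  linarith

lemma neg_mul_pow_mul_neg_mul_pow (β c₁ c₂ : ℝ) {k n : ℕ} (hkn : k ≤ n) :
    (-(β * c₁)) ^ k * (-(β * c₂)) ^ (n - k) = (-β) ^ n * c₁ ^ k * c₂ ^ (n - k) := by
  rw [← Nat.add_sub_cancel' hkn, pow_add, Nat.add_sub_cancel_left]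
  ring

lemma add_pow_mul_exp_neg_add (a b : ℝ) (n : ℕ) :
    (a + b) ^ n * exp (-(a + b)) = ∑ k ∈ Finset.range (n + 1),
      n.choose k * ((a ^ k * exp (-a)) * (b ^ (n - k) * exp (-b))) := by
  rw [add_pow, Finset.sum_mul]
  refine Finset.sum_congr rfl fun k _ => ?_
  rw [neg_add, exp_add]
  ring

section

variable {Ω : Type*} [MeasurableSpace Ω] {μ : Measure Ω} {I : Ω → ℝ}

lemma norm_pow_mul_exp_neg_mul_le {x : ℝ} (hx : 0 ≤ x) (m : ℕ) {s₀ s : ℝ} (hs : s₀ ≤ s) :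
    ‖x ^ m * exp (-s * x)‖ ≤ x ^ m * exp (-s₀ * x) := by
  rw [Real.norm_of_nonneg (by positivity)]
  gcongr

lemma integrable_pow_mul_exp_neg_mul_of_le (hIm : Measurable I) (hI : ∀ ω, 0 ≤ I ω) {m : ℕ}
    {s₀ s : ℝ} (hs : s₀ ≤ s) (h : Integrable (fun ω => I ω ^ m * exp (-s₀ * I ω)) μ) :
    Integrable (fun ω => I ω ^ m * exp (-s * I ω)) μ :=
  h.mono' (by fun_prop) (ae_of_all _ fun ω => norm_pow_mul_exp_neg_mul_le (hI ω) m hs)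

lemma hasDerivAt_integral_pow_mul_exp_neg_mul (hIm : Measurable I) (hI : ∀ ω, 0 ≤ I ω)
    {m : ℕ} {s₀ s : ℝ} (hs : s₀ < s)
    (hm : Integrable (fun ω => I ω ^ m * exp (-s₀ * I ω)) μ)
    (hm' : Integrable (fun ω => I ω ^ (m + 1) * exp (-s₀ * I ω)) μ) :
    HasDerivAt (fun s => ∫ ω, I ω ^ m * exp (-s * I ω) ∂μ)
      (-∫ ω, I ω ^ (m + 1) * exp (-s * I ω) ∂μ) s := by
  rw [← integral_neg]
  refine (hasDerivAt_integral_of_dominated_loc_of_deriv_le (isOpen_Ioi.mem_nhds hs)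
    (F := fun s ω => I ω ^ m * exp (-s * I ω))
    (F' := fun s ω => -(I ω ^ (m + 1) * exp (-s * I ω))) (Eventually.of_forall fun t => by fun_prop)
    (integrable_pow_mul_exp_neg_mul_of_le hIm hI hs.le hm) (by fun_prop)
    (ae_of_all _ fun ω t ht => ?_) hm' (ae_of_all _ fun ω t _ => ?_)).2
  · rw [norm_neg]
    exact norm_pow_mul_exp_neg_mul_le (hI ω) (m + 1) (le_of_lt ht)
  · have h := (((hasDerivAt_neg t).mul_const (I ω)).exp).const_mul (I ω ^ m)
    exact h.congr_deriv (by ring)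

lemma continuousWithinAt_integral_pow_mul_exp_neg_mul (hIm : Measurable I) (hI : ∀ ω, 0 ≤ I ω)
    {n : ℕ} {s₀ : ℝ} (hn : Integrable (fun ω => I ω ^ n * exp (-s₀ * I ω)) μ) :
    ContinuousWithinAt (fun s => ∫ ω, I ω ^ n * exp (-s * I ω) ∂μ) (Ici s₀) s₀ :=
  continuousWithinAt_of_dominated (Eventually.of_forall fun s => by fun_prop)
    (eventually_nhdsWithin_of_forall fun s hs =>
      ae_of_all _ fun ω => norm_pow_mul_exp_neg_mul_le (hI ω) n hs) hn
    (ae_of_all _ fun ω => by fun_prop)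

lemma iteratedDeriv_eqOn_integral_pow_mul_exp_neg_mul (hIm : Measurable I) (hI : ∀ ω, 0 ≤ I ω)
    {L : ℝ → ℝ} {s₀ : ℝ} (hL : ∀ s, s₀ < s → L s = ∫ ω, exp (-s * I ω) ∂μ) {n : ℕ}
    (hmom : ∀ m ≤ n, Integrable (fun ω => I ω ^ m * exp (-s₀ * I ω)) μ) :
    EqOn (iteratedDeriv n L) (fun s => (-1) ^ n * ∫ ω, I ω ^ n * exp (-s * I ω) ∂μ) (Ioi s₀) := by
  induction n with
  | zero => simpa [EqOn] using hL
  | succ n ih =>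
    intro s hs
    have hderiv := (hasDerivAt_integral_pow_mul_exp_neg_mul hIm hI hs (hmom n n.le_succ)
      (hmom (n + 1) le_rfl)).const_mul ((-1 : ℝ) ^ n)
    rw [iteratedDeriv_succ, ((ih fun m hm => hmom m (hm.trans n.le_succ)).eventuallyEq_of_mem
      (isOpen_Ioi.mem_nhds hs)).deriv_eq, hderiv.deriv, pow_succ]
    ring

lemma iteratedDeriv_eq_integral_pow_mul_exp_neg_mul (hIm : Measurable I) (hI : ∀ ω, 0 ≤ I ω)
    {L : ℝ → ℝ} {s₀ : ℝ} (hL : ∀ s, s₀ < s → L s = ∫ ω, exp (-s * I ω) ∂μ) {n : ℕ}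
    (hLd : ContDiff ℝ n L) (hmom : ∀ m ≤ n, Integrable (fun ω => I ω ^ m * exp (-s₀ * I ω)) μ) :
    iteratedDeriv n L s₀ = (-1) ^ n * ∫ ω, I ω ^ n * exp (-s₀ * I ω) ∂μ := by
  have hleft : Tendsto (iteratedDeriv n L) (𝓝[>] s₀) (𝓝 (iteratedDeriv n L s₀)) :=
    ((hLd.continuous_iteratedDeriv n le_rfl).tendsto s₀).mono_left nhdsWithin_le_nhds
  have hright := (((continuousWithinAt_integral_pow_mul_exp_neg_mul hIm hI (hmom n le_rfl)).mono
    Ioi_subset_Ici_self).tendsto.const_mul ((-1 : ℝ) ^ n)).congr'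
    ((iteratedDeriv_eqOn_integral_pow_mul_exp_neg_mul hIm hI hL hmom).symm.eventuallyEq_nhdsWithin)
  exact tendsto_nhds_unique hleft hright

lemma integral_mul_pow_mul_exp_neg_eq_iteratedDeriv (hIm : Measurable I) (hI : ∀ ω, 0 ≤ I ω)
    {L : ℝ → ℝ} {s₀ : ℝ} (hL : ∀ s, s₀ < s → L s = ∫ ω, exp (-s * I ω) ∂μ) {n : ℕ}
    (hLd : ContDiff ℝ n L) (hmom : ∀ m ≤ n, Integrable (fun ω => I ω ^ m * exp (-s₀ * I ω)) μ) :
    ∫ ω, (s₀ * I ω) ^ n * exp (-(s₀ * I ω)) ∂μ = (-s₀) ^ n * iteratedDeriv n L s₀ := by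
  rw [iteratedDeriv_eq_integral_pow_mul_exp_neg_mul hIm hI hL hLd hmom, ← mul_assoc, ← mul_pow,
    neg_mul_neg, mul_one, ← integral_const_mul]
  simp only [mul_pow, neg_mul, mul_assoc]

lemma MeasureTheory.Integrable.mul_pow_mul_exp_neg {n : ℕ} {s : ℝ}
    (h : Integrable (fun ω => I ω ^ n * exp (-s * I ω)) μ) :
    Integrable (fun ω => (s * I ω) ^ n * exp (-(s * I ω))) μ := by
  simpa only [mul_pow, neg_mul, mul_assoc] using h.const_mul (s ^ n)

lemma measure_lt_eq_lintegral_of_indepFun [IsFiniteMeasure μ] {T G : Ω → ℝ} (hT : Measurable T)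
    (hG : Measurable G) (hTG : IndepFun T G μ) :
    μ {ω | T ω < G ω} = ∫⁻ ω, μ {ω' | T ω < G ω'} ∂μ := by
  have hlt : MeasurableSet {p : ℝ × ℝ | p.1 < p.2} := measurableSet_lt measurable_fst measurable_snd
  have htail : Measurable fun t => μ.map G (Ioi t) :=
    (Antitone.measurable fun t t' h => measure_mono (Ioi_subset_Ioi h))
  rw [show {ω | T ω < G ω} = (fun ω => (T ω, G ω)) ⁻¹' {p | p.1 < p.2} from rfl,
    ← Measure.map_apply (hT.prodMk hG) hlt,
    (indepFun_iff_map_prod_eq_prod_map_map hT.aemeasurable hG.aemeasurable).1 hTG,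
    Measure.prod_apply hlt]
  change ∫⁻ t, μ.map G (Ioi t) ∂(μ.map T) = _
  rw [lintegral_map htail hT]
  simp_rw [Measure.map_apply hG measurableSet_Ioi]
  rfl

lemma measureReal_lt_eq_integral_of_indepFun [IsFiniteMeasure μ] {T G : Ω → ℝ}
    (hT : Measurable T) (hG : Measurable G) (hTG : IndepFun T G μ) :
    μ.real {ω | T ω < G ω} = ∫ ω, μ.real {ω' | T ω < G ω'} ∂μ := by
  have htail : Measurable fun t => μ {ω' | t < G ω'} :=
    Antitone.measurable fun t t' h => measure_mono fun ω (hω : t' < G ω) => h.trans_lt hω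
  rw [measureReal_def, measure_lt_eq_lintegral_of_indepFun hT hG hTG]
  exact (integral_toReal (htail.comp hT).aemeasurable
    (ae_of_all _ fun ω => measure_lt_top μ _)).symm

lemma integral_erlangSurvival_add_of_indepFun {X Y : Ω → ℝ} (hX : Measurable X)
    (hY : Measurable Y) (hXY : IndepFun X Y μ) {M : ℕ}
    (hXi : ∀ k < M, Integrable (fun ω => X ω ^ k * exp (-X ω)) μ)
    (hYi : ∀ k < M, Integrable (fun ω => Y ω ^ k * exp (-Y ω)) μ) :
    ∫ ω, erlangSurvival M (X ω + Y ω) ∂μ = ∑ n ∈ Finset.range M,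
      (∑ k ∈ Finset.range (n + 1), n.choose k *
        ((∫ ω, X ω ^ k * exp (-X ω) ∂μ) * ∫ ω, Y ω ^ (n - k) * exp (-Y ω) ∂μ)) / n.factorial := by
  have hind : ∀ k l, IndepFun (fun ω => X ω ^ k * exp (-X ω)) (fun ω => Y ω ^ l * exp (-Y ω)) μ :=
    fun k l => hXY.comp (φ := fun x => x ^ k * exp (-x)) (ψ := fun y => y ^ l * exp (-y))
      (by fun_prop) (by fun_prop)
  have hint : ∀ n ∈ Finset.range M, ∀ k ∈ Finset.range (n + 1), Integrable
      (fun ω => n.choose k * ((X ω ^ k * exp (-X ω)) * (Y ω ^ (n - k) * exp (-Y ω)))) μ := by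
    intro n hn k hk
    simp only [Finset.mem_range] at hn hk
    exact ((hind k (n - k)).integrable_mul (hXi k (by omega)) (hYi (n - k) (by omega))).const_mul _
  simp only [erlangSurvival, add_pow_mul_exp_neg_add]
  rw [integral_finsetSum _ fun n hn => (integrable_finsetSum _ (hint n hn)).div_const _]
  refine Finset.sum_congr rfl fun n hn => ?_
  rw [integral_div, integral_finsetSum _ (hint n hn)]
  refine congrArg (· / _) (Finset.sum_congr rfl fun k _ => ?_)
  rw [integral_const_mul]
  exact congrArg _ ((hind k (n - k)).integral_mul_eq_mul_integral (by fun_prop) (by fun_prop))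

end

/-- Gamma(M,1) coverage with two independent interference terms:
Pr(G > β(c₁I₁+c₂I₂)) = Σ_{n<M} ((-β)^n/n!) Σ_{n₁≤n} C(n,n₁) c₁^{n₁} c₂^{n-n₁}
  L₁^{(n₁)}(βc₁) L₂^{(n-n₁)}(βc₂). -/
theorem stmt4 {Ω : Type*} [MeasurableSpace Ω] (μ : Measure Ω) [IsProbabilityMeasure μ]
    (M : ℕ) (hM : 1 ≤ M) (G I₁ I₂ : Ω → ℝ)
    (hGm : Measurable G) (hI1m : Measurable I₁) (hI2m : Measurable I₂)
    (hI1nn : ∀ ω, 0 ≤ I₁ ω) (hI2nn : ∀ ω, 0 ≤ I₂ ω)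
    (hindep : iIndepFun (m := fun _ : Fin 3 => Real.measurableSpace) ![G, I₁, I₂] μ)
    (hG : ∀ t : ℝ, 0 ≤ t →
      (μ {ω | G ω > t}).toReal
        = ∫ x in Set.Ioi t, x ^ (M - 1) * Real.exp (-x) / (M - 1).factorial)
    (L₁ L₂ : ℝ → ℝ)
    (hL1 : ∀ s : ℝ, 0 < s → L₁ s = ∫ ω, Real.exp (-s * I₁ ω) ∂μ)
    (hL2 : ∀ s : ℝ, 0 < s → L₂ s = ∫ ω, Real.exp (-s * I₂ ω) ∂μ)
    (hL1d : ContDiff ℝ (M - 1 : ℕ) L₁) (hL2d : ContDiff ℝ (M - 1 : ℕ) L₂)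
    (c₁ c₂ β : ℝ) (hc1 : 0 < c₁) (hc2 : 0 < c₂) (hβ : 0 < β)
    (hmom1 : ∀ n ≤ M - 1, Integrable (fun ω => I₁ ω ^ n * Real.exp (-(β * c₁) * I₁ ω)) μ)
    (hmom2 : ∀ n ≤ M - 1, Integrable (fun ω => I₂ ω ^ n * Real.exp (-(β * c₂) * I₂ ω)) μ) :
    (μ {ω | G ω > β * (c₁ * I₁ ω + c₂ * I₂ ω)}).toReal
      = ∑ n ∈ Finset.range M, ((-β) ^ n / n.factorial) *
          ∑ n₁ ∈ Finset.range (n + 1), (n.choose n₁ : ℝ) * c₁ ^ n₁ * c₂ ^ (n - n₁) *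
            iteratedDeriv n₁ L₁ (β * c₁) * iteratedDeriv (n - n₁) L₂ (β * c₂) := by

  obtain ⟨K, rfl⟩ : ∃ K, M = K + 1 := ⟨M - 1, by omega⟩
  simp only [Nat.add_sub_cancel, gt_iff_lt] at hG hL1d hL2d hmom1 hmom2 ⊢
  have hmeas : ∀ i, Measurable (![G, I₁, I₂] i) := fun i => by fin_cases i <;> assumption
  have hI₁₂ : IndepFun (fun ω => β * c₁ * I₁ ω) (fun ω => β * c₂ * I₂ ω) μ :=
    (hindep.indepFun (i := 1) (j := 2) (by decide)).comp (measurable_const_mul _)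
      (measurable_const_mul _)
  have hTG : IndepFun (fun ω => β * (c₁ * I₁ ω + c₂ * I₂ ω)) G μ :=
    (hindep.indepFun_prodMk hmeas 1 2 0 (by decide) (by decide)).comp
      (φ := fun p : ℝ × ℝ => β * (c₁ * p.1 + c₂ * p.2)) (by fun_prop) measurable_id
  have htail : ∀ ω, μ.real {ω' | β * (c₁ * I₁ ω + c₂ * I₂ ω) < G ω'}
      = erlangSurvival (K + 1) (β * c₁ * I₁ ω + β * c₂ * I₂ ω) := fun ω => by
    rw [← integral_Ioi_pow_mul_exp_neg_div_factorial, measureReal_def, hG _ (mul_nonneg hβ.le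
      (add_nonneg (mul_nonneg hc1.le (hI1nn ω)) (mul_nonneg hc2.le (hI2nn ω))))]
    ring_nf
  have hmoment₁ : ∀ k ≤ K, ∫ ω, (β * c₁ * I₁ ω) ^ k * exp (-(β * c₁ * I₁ ω)) ∂μ
      = (-(β * c₁)) ^ k * iteratedDeriv k L₁ (β * c₁) := fun k hk =>
    integral_mul_pow_mul_exp_neg_eq_iteratedDeriv hI1m hI1nn
      (fun s hs => hL1 s ((mul_pos hβ hc1).trans hs)) (hL1d.of_le (by exact_mod_cast hk))
      fun m hm => hmom1 m (hm.trans hk)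
  have hmoment₂ : ∀ k ≤ K, ∫ ω, (β * c₂ * I₂ ω) ^ k * exp (-(β * c₂ * I₂ ω)) ∂μ
      = (-(β * c₂)) ^ k * iteratedDeriv k L₂ (β * c₂) := fun k hk =>
    integral_mul_pow_mul_exp_neg_eq_iteratedDeriv hI2m hI2nn
      (fun s hs => hL2 s ((mul_pos hβ hc2).trans hs)) (hL2d.of_le (by exact_mod_cast hk))
      fun m hm => hmom2 m (hm.trans hk)
  rw [← measureReal_def, measureReal_lt_eq_integral_of_indepFun (by fun_prop) hGm hTG,
    integral_congr_ae (ae_of_all _ htail), integral_erlangSurvival_add_of_indepFun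
      (by fun_prop) (by fun_prop) hI₁₂ (fun k hk => (hmom1 k (by omega)).mul_pow_mul_exp_neg)
      (fun k hk => (hmom2 k (by omega)).mul_pow_mul_exp_neg)]
  refine Finset.sum_congr rfl fun n hn => ?_
  rw [Finset.mul_sum, Finset.sum_div]
  refine Finset.sum_congr rfl fun k hk => ?_
  have hkn : k ≤ n := Finset.mem_range_succ_iff.mp hk
  have hnK : n ≤ K := Finset.mem_range_succ_iff.mp hn
  rw [hmoment₁ k (hkn.trans hnK), hmoment₂ (n - k) ((n.sub_le k).trans hnK)]
  linear_combination (n.choose k * iteratedDeriv k L₁ (β * c₁) * iteratedDeriv (n - k) L₂ (β * c₂)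
    / n.factorial) * neg_mul_pow_mul_neg_mul_pow β c₁ c₂ hkn
end

section
/- Let N ≥ 1 be an integer-valued random variable with Pr(N = n) = (3.5^{3.5} Γ(n+3.5) ρ^{n-1}) / (Γ(n) Γ(3.5) (3.5+ρ)^{n+3.5}) for n ≥ 1 and some ρ > 0. Then Σ_{n=1}^∞ (1/n) Pr(N = n) = (1/ρ)(1 - (1 + ρ/3.5)^{-3.5}). -/
/-!
The weight `1/n` turns the `Γ(n)` of the p.m.f. into `n!`, so the sum becomes, up to a constant
factor, the generalized binomial series `∑ Γ(n + a) xⁿ / n! = Γ(a) (1 - x)^(-a)` at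
`x = ρ / (a + ρ)` with its constant term removed (here `a = 3.5`).
-/

open Real

theorem Real.Gamma_add_nat_eq_ascPochhammer_mul {a : ℝ} (ha : 0 < a) (n : ℕ) :
    Gamma (a + n) = (ascPochhammer ℝ n).eval a * Gamma a := by
  induction n with
  | zero => simp
  | succ n ih =>
    rw [Nat.cast_succ, ← add_assoc, Gamma_add_one (by positivity), ih, ascPochhammer_succ_eval]
    ring

theorem Ring.choose_add_natCast_sub_one {K : Type*} [Field K] [CharZero K] (a : K) (n : ℕ) :
    Ring.choose (a + n - 1) n = (ascPochhammer K n).eval a / n.factorial := by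
  rw [← Ring.multichoose_eq, eq_div_iff (Nat.cast_ne_zero.2 n.factorial_ne_zero), mul_comm,
    ← nsmul_eq_mul, Ring.factorial_nsmul_multichoose_eq_ascPochhammer,
    Polynomial.ascPochhammer_smeval_eq_eval]

theorem Real.hasSum_Gamma_add_mul_pow_div_factorial {a x : ℝ} (ha : 0 < a) (hx : |x| < 1) :
    HasSum (fun n : ℕ ↦ Gamma (n + a) * x ^ n / n.factorial) (Gamma a * (1 - x) ^ (-a)) := by
  have hx_mem : x ∈ Metric.eball (0 : ℝ) 1 := by
    rw [← ENNReal.ofReal_one, Metric.eball_ofReal, mem_ball_zero_iff, norm_eq_abs]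
    exact hx
  have h := ((one_div_one_sub_rpow_hasFPowerSeriesOnBall_zero a).hasSum hx_mem).mul_left (Gamma a)
  simp only [FormalMultilinearSeries.ofScalars_apply_eq, zero_add, smul_eq_mul,
    Ring.choose_add_natCast_sub_one] at h
  rw [rpow_neg (by linarith [le_abs_self x]), ← one_div]
  refine h.congr_fun fun n ↦ ?_
  rw [add_comm, Gamma_add_nat_eq_ascPochhammer_mul ha]
  ring

theorem tsum_one_div_succ_mul_sizeBiasedNegBinomial {a ρ : ℝ} (ha : 0 < a) (hρ : 0 < ρ) :
    ∑' n : ℕ, (1 / ((n : ℝ) + 1)) *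
        (a ^ a * Gamma ((n : ℝ) + 1 + a) * ρ ^ n /
          (Gamma ((n : ℝ) + 1) * Gamma a * (a + ρ) ^ ((n : ℝ) + 1 + a)))
      = (1 / ρ) * (1 - (1 + ρ / a) ^ (-a)) := by
  set c := 1 + ρ / a with hc_def
  set x := ρ / (a + ρ) with hx_def
  have hc : 0 < c := by positivity
  have hx : |x| < 1 := by
    rw [abs_of_pos (by positivity), div_lt_one (by positivity)]
    linarith
  have h1x : (1 - x) ^ (-a) = c ^ a := by
    rw [show 1 - x = c⁻¹ by rw [hc_def, hx_def]; field_simp; ring, inv_rpow hc.le,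
      rpow_neg hc.le, inv_inv]
  have hpow (n : ℕ) : (a + ρ) ^ ((n : ℝ) + 1 + a) = (a + ρ) ^ (n + 1) * (a ^ a * c ^ a) := by
    rw [rpow_add (by positivity), ← mul_rpow ha.le hc.le,
      show a * c = a + ρ by rw [hc_def]; field_simp]
    norm_cast
  have htail := (hasSum_nat_add_iff' 1).2 (hasSum_Gamma_add_mul_pow_div_factorial ha hx)
  simp only [Finset.sum_range_one, Nat.cast_zero, zero_add, pow_zero, Nat.factorial_zero,
    Nat.cast_one, div_one, mul_one, h1x] at htail
  have hΓ : 0 < Gamma a := Gamma_pos_of_pos ha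
  convert (htail.mul_left (1 / (ρ * Gamma a * c ^ a))).tsum_eq using 1
  · refine tsum_congr fun n ↦ ?_
    rw [hpow, Gamma_nat_eq_factorial, Nat.factorial_succ, div_pow]
    push_cast
    field_simp
    ring
  · rw [rpow_neg hc.le]
    field_simp

/-- For the size-biased negative-binomial-type p.m.f.
Pr(N=n) = 3.5^{3.5}Γ(n+3.5)ρ^{n-1}/(Γ(n)Γ(3.5)(3.5+ρ)^{n+3.5}) (n ≥ 1),
one has Σ_{n≥1} (1/n)Pr(N=n) = (1/ρ)(1 - (1+ρ/3.5)^{-3.5}). -/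
theorem stmt6 (ρ : ℝ) (hρ : 0 < ρ) :
    ∑' n : ℕ, (1 / ((n : ℝ) + 1)) *
        ((3.5 : ℝ) ^ (3.5 : ℝ) * Real.Gamma ((n : ℝ) + 1 + 3.5) * ρ ^ n /
          (Real.Gamma ((n : ℝ) + 1) * Real.Gamma 3.5 * (3.5 + ρ) ^ ((n : ℝ) + 1 + 3.5)))
      = (1 / ρ) * (1 - (1 + ρ / 3.5) ^ (-(3.5 : ℝ))) :=
  tsum_one_div_succ_mul_sizeBiasedNegBinomial (by norm_num) hρ
end

section
/- For λ > 0, α > 2, r > 0, the function L(s) = exp(−(2π/α)λ s^{2/α} B'(2/α, 1−2/α, 1/(1+s r^{−α}))) satisfies L(s) = 1 − (2πλ r^{2−α}/(α(1 − 2/α))) s + o(s) as s → 0⁺. -/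
/-! On `[z, 1]` the factor `u ^ (a - 1)` of the integrand of `B'(a, b, z)` lies between `1` and
`z ^ (a - 1)`, so `B'(a, b, z) ∼ (1 - z) ^ b / b` as `z → 1⁻`. Substituting
`z = 1 / (1 + s r^{-α})` with `a + b = 1`, the exponent `F s` of `L(s) = exp (-F s)` is asymptotic
to `C s` as `s → 0⁺`, and `exp (-F) = 1 - F + o(F)` gives the expansion. -/

open MeasureTheory Real Filter Asymptotics

open scoped Topology

-- The paper's `B'(a, b, z)`.
noncomputable def upperIncompleteBeta (a b z : ℝ) : ℝ :=
  ∫ u in z..1, u ^ (a - 1) * (1 - u) ^ (b - 1)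

section OneSubRpow

variable {b : ℝ}

theorem integral_one_sub_rpow_sub_one (hb : 0 < b) (z : ℝ) :
    ∫ u in z..1, (1 - u) ^ (b - 1) = (1 - z) ^ b / b := by
  rw [intervalIntegral.integral_comp_sub_left (fun v : ℝ => v ^ (b - 1)), sub_self,
    integral_rpow (Or.inl (by linarith)), sub_add_cancel, zero_rpow hb.ne', sub_zero]

theorem intervalIntegrable_one_sub_rpow_sub_one (hb : 0 < b) (z : ℝ) :
    IntervalIntegrable (fun u : ℝ => (1 - u) ^ (b - 1)) volume z 1 := by
  simpa using ((intervalIntegral.intervalIntegrable_rpow' (a := 0) (b := 1 - z)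
    (by linarith : (-1 : ℝ) < b - 1)).comp_sub_left 1).symm

end OneSubRpow

section UpperIncompleteBeta

variable {a b z : ℝ}

theorem upperIncompleteBeta_integrand_bounds {u : ℝ} (ha : a ≤ 1) (hz : 0 < z)
    (hu : u ∈ Set.Icc z 1) :
    (1 - u) ^ (b - 1) ≤ u ^ (a - 1) * (1 - u) ^ (b - 1) ∧
      u ^ (a - 1) * (1 - u) ^ (b - 1) ≤ z ^ (a - 1) * (1 - u) ^ (b - 1) := by
  have hu0 : 0 < u := hz.trans_le hu.1
  have hnonneg : 0 ≤ (1 - u) ^ (b - 1) := rpow_nonneg (by linarith [hu.2]) _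
  exact ⟨le_mul_of_one_le_left hnonneg
      (one_le_rpow_of_pos_of_le_one_of_nonpos hu0 hu.2 (by linarith)),
    mul_le_mul_of_nonneg_right (rpow_le_rpow_of_nonpos hz hu.1 (by linarith)) hnonneg⟩

theorem intervalIntegrable_upperIncompleteBeta_integrand (ha : a ≤ 1) (hb : 0 < b)
    (hz0 : 0 < z) (hz1 : z ≤ 1) :
    IntervalIntegrable (fun u : ℝ => u ^ (a - 1) * (1 - u) ^ (b - 1)) volume z 1 := by
  refine ((intervalIntegrable_one_sub_rpow_sub_one hb z).const_mul (z ^ (a - 1))).mono_fun'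
    (by fun_prop : Measurable _).aestronglyMeasurable ?_
  refine ae_restrict_of_forall_mem measurableSet_uIoc fun u hu => ?_
  rw [Set.uIoc_of_le hz1] at hu
  have hu' : u ∈ Set.Icc z 1 := Set.Ioc_subset_Icc_self hu
  have hbounds := upperIncompleteBeta_integrand_bounds (b := b) ha hz0 hu'
  dsimp only
  rw [Real.norm_of_nonneg ((rpow_nonneg (by linarith [hu.2]) _).trans hbounds.1)]
  exact hbounds.2

theorem upperIncompleteBeta_bounds (ha : a ≤ 1) (hb : 0 < b) (hz0 : 0 < z) (hz1 : z ≤ 1) :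
    (1 - z) ^ b / b ≤ upperIncompleteBeta a b z ∧
      upperIncompleteBeta a b z ≤ z ^ (a - 1) * ((1 - z) ^ b / b) := by
  have hJ := intervalIntegrable_one_sub_rpow_sub_one hb z
  have hI := intervalIntegrable_upperIncompleteBeta_integrand ha hb hz0 hz1
  rw [← integral_one_sub_rpow_sub_one hb, ← intervalIntegral.integral_const_mul]
  exact ⟨intervalIntegral.integral_mono_on hz1 hJ hI fun u hu =>
      (upperIncompleteBeta_integrand_bounds (b := b) ha hz0 hu).1,
    intervalIntegral.integral_mono_on hz1 hI (hJ.const_mul _) fun u hu =>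
      (upperIncompleteBeta_integrand_bounds (b := b) ha hz0 hu).2⟩

theorem upperIncompleteBeta_isEquivalent (ha : a ≤ 1) (hb : 0 < b) :
    upperIncompleteBeta a b ~[𝓝[<] 1] fun z => (1 - z) ^ b / b := by
  refine isEquivalent_of_tendsto_one ?_
  have hpow : Tendsto (fun z : ℝ => z ^ (a - 1)) (𝓝[<] 1) (𝓝 1) := by
    simpa using ((continuousAt_rpow_const 1 (a - 1) (Or.inl one_ne_zero)).tendsto).mono_left
      nhdsWithin_le_nhds
  have hnear : ∀ᶠ z in 𝓝[<] (1 : ℝ), z ∈ Set.Ioo 0 1 := Ioo_mem_nhdsLT zero_lt_one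
  refine tendsto_of_tendsto_of_tendsto_of_le_of_le' tendsto_const_nhds hpow ?_ ?_
  · filter_upwards [hnear] with z hz
    have hpos : 0 < (1 - z) ^ b / b := div_pos (rpow_pos_of_pos (by linarith [hz.2]) b) hb
    rw [Pi.div_apply, le_div_iff₀ hpos, one_mul]
    exact (upperIncompleteBeta_bounds ha hb hz.1 hz.2.le).1
  · filter_upwards [hnear] with z hz
    have hpos : 0 < (1 - z) ^ b / b := div_pos (rpow_pos_of_pos (by linarith [hz.2]) b) hb
    rw [Pi.div_apply, div_le_iff₀ hpos]
    exact (upperIncompleteBeta_bounds ha hb hz.1 hz.2.le).2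

end UpperIncompleteBeta

theorem tendsto_one_div_one_add_mul_nhdsGT_zero {c : ℝ} (hc : 0 < c) :
    Tendsto (fun s : ℝ => 1 / (1 + s * c)) (𝓝[>] 0) (𝓝[<] 1) := by
  refine tendsto_nhdsWithin_iff.mpr ⟨?_, ?_⟩
  · have hcont : ContinuousAt (fun s : ℝ => 1 / (1 + s * c)) 0 := by
      fun_prop (disch := norm_num)
    simpa using hcont.tendsto.mono_left nhdsWithin_le_nhds
  · filter_upwards [self_mem_nhdsWithin] with s (hs : 0 < s)
    rw [Set.mem_Iio, div_lt_one (by positivity)]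
    linarith [mul_pos hs hc]

theorem rpow_mul_one_sub_one_div_one_add_mul_rpow {a b c s : ℝ} (hab : a + b = 1) (hc : 0 ≤ c)
    (hs : 0 < s) :
    s ^ a * (1 - 1 / (1 + s * c)) ^ b = c ^ b * (1 + s * c) ^ (-b) * s := by
  have hx : 0 < 1 + s * c := by positivity
  have hsub : 1 - 1 / (1 + s * c) = s * c * (1 + s * c)⁻¹ := by field_simp; ring
  rw [hsub, mul_rpow (by positivity) (by positivity), mul_rpow hs.le hc, inv_rpow hx.le,
    ← rpow_neg hx.le]
  calc s ^ a * (s ^ b * c ^ b * (1 + s * c) ^ (-b))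
      = (s ^ a * s ^ b) * c ^ b * (1 + s * c) ^ (-b) := by ring
    _ = c ^ b * (1 + s * c) ^ (-b) * s := by rw [← rpow_add hs, hab, rpow_one]; ring

theorem rpow_mul_upperIncompleteBeta_isEquivalent {a b c : ℝ} (hab : a + b = 1) (hb : 0 < b)
    (hc : 0 < c) :
    (fun s => s ^ a * upperIncompleteBeta a b (1 / (1 + s * c))) ~[𝓝[>] 0]
      fun s => c ^ b / b * s := by
  have hbeta := (upperIncompleteBeta_isEquivalent (a := a) (by linarith) hb).comp_tendsto
    (tendsto_one_div_one_add_mul_nhdsGT_zero hc)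
  have hfactor : (fun s : ℝ => (1 + s * c) ^ (-b)) ~[𝓝[>] 0] fun _ => 1 := by
    refine (isEquivalent_const_iff_tendsto one_ne_zero).mpr ?_
    have hcont : ContinuousAt (fun s : ℝ => (1 + s * c) ^ (-b)) 0 := by
      fun_prop (disch := norm_num)
    simpa using hcont.tendsto.mono_left nhdsWithin_le_nhds
  refine ((IsEquivalent.refl (u := fun s : ℝ => s ^ a)).mul hbeta).trans ?_
  refine IsEquivalent.congr_left (u := fun s => c ^ b / b * s * (1 + s * c) ^ (-b)) ?_ ?_
  · simpa only [Pi.mul_def, mul_one] using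
      (IsEquivalent.refl (u := fun s : ℝ => c ^ b / b * s)).mul hfactor
  · filter_upwards [self_mem_nhdsWithin] with s (hs : 0 < s)
    simp only [Pi.mul_apply, Function.comp_apply]
    rw [← mul_div_assoc, rpow_mul_one_sub_one_div_one_add_mul_rpow hab hc.le hs]
    ring

theorem isLittleO_exp_neg_sub_one_sub_mul {l : Filter ℝ} {F : ℝ → ℝ} {C : ℝ}
    (hl : Tendsto id l (𝓝 0)) (hF : F ~[l] fun s => C * s) :
    (fun s => exp (-F s) - (1 - C * s)) =o[l] id := by
  have hFO : F =O[l] id := hF.isBigO.trans ((isBigO_refl id l).const_mul_left C)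
  have hexp : (fun s => exp (-F s) - (1 - F s)) =o[l] F := by
    have := (Real.exp_sub_sum_range_succ_isLittleO_pow 1).comp_tendsto
      (by simpa using (hFO.trans_tendsto hl).neg)
    simpa [Finset.sum_range_succ, Function.comp_def, ← sub_eq_add_neg] using this
  have hlin : (fun s => F s - C * s) =o[l] id :=
    hF.isLittleO.trans_isBigO ((isBigO_refl id l).const_mul_left C)
  refine ((hexp.trans_isBigO hFO).sub hlin).congr_left fun s => ?_
  ring

theorem stmt11_general (lam α r : ℝ) (hα : 2 < α) (hr : 0 < r) :
    (fun s : ℝ =>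
        Real.exp (-((2 * π / α) * lam * s ^ (2 / α) *
          ∫ u in (1 / (1 + s * r ^ (-α)))..(1 : ℝ),
            u ^ (2 / α - 1) * (1 - u) ^ ((1 - 2 / α) - 1)))
        - (1 - (2 * π * lam * r ^ (2 - α) / (α * (1 - 2 / α))) * s))
      =o[nhdsWithin 0 (Set.Ioi 0)] (id : ℝ → ℝ) := by
  have hα0 : 0 < α := by linarith
  have hb : 0 < 1 - 2 / α := by rw [sub_pos, div_lt_one hα0]; exact hα
  have hpow : (r ^ (-α)) ^ (1 - 2 / α) = r ^ (2 - α) := by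
    rw [← rpow_mul hr.le]; congr 1; field_simp; ring
  have hequiv := (IsEquivalent.refl (u := fun _ : ℝ => 2 * π / α * lam)).mul
    (rpow_mul_upperIncompleteBeta_isEquivalent (a := 2 / α) (by ring) hb
      (rpow_pos_of_pos hr (-α)))
  refine isLittleO_exp_neg_sub_one_sub_mul (tendsto_id.mono_left nhdsWithin_le_nhds) ?_
  convert hequiv using 1
  · ext s; simp only [Pi.mul_apply, upperIncompleteBeta]; ring
  · ext s; simp only [Pi.mul_apply, hpow]; field_simp

/-- First-order expansion of the interference Laplace transform at s → 0⁺: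
L(s) = 1 − (2πλ r^{2−α}/(α(1−2/α))) s + o(s). -/
theorem stmt11 (lam α r : ℝ) (hlam : 0 < lam) (hα : 2 < α) (hr : 0 < r) :
    (fun s : ℝ =>
        Real.exp (-((2 * π / α) * lam * s ^ (2 / α) *
          ∫ u in (1 / (1 + s * r ^ (-α)))..(1 : ℝ),
            u ^ (2 / α - 1) * (1 - u) ^ ((1 - 2 / α) - 1)))
        - (1 - (2 * π * lam * r ^ (2 - α) / (α * (1 - 2 / α))) * s))
      =o[nhdsWithin 0 (Set.Ioi 0)] (id : ℝ → ℝ) :=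
  stmt11_general lam α r hα hr
end

section
/- Let I be a nonnegative random variable with E[I^{N}] < ∞, and set f(τ) = 2^{cτ} − 1 for a constant c > 0. Then 1 − Pr(Gamma(N,1) > f(τ)·I) = τ^N (c ln 2)^N E[I^N]/N! + o(τ^N) as τ → 0⁺, where the Gamma(N,1) variable is independent of I. -/
/-!
Conditioning on `I` gives `1 - P(G > a I) = E[F(a I)]`, where `F = erlangCDF N` is the
distribution function of Gamma(N,1). Since `e^{-t} ≤ e^{-x} ≤ 1` on `(0, t]`,
`e^{-t} t^N / N! ≤ F(t) ≤ t^N / N!`, so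
`E[F(a I)] = a^N E[I^N] / N! + a^N · O(E[(1 - e^{-a I}) I^N])`, and the last expectation tends to
`0` by dominated convergence (dominated by `I^N`). Finally `a = 2^{cτ} - 1 ~ (c log 2) τ`.
-/

open MeasureTheory Real Filter Asymptotics ProbabilityTheory Set Topology

noncomputable def erlangPDF (N : ℕ) (x : ℝ) : ℝ := x ^ (N - 1) * exp (-x) / (N - 1).factorial

noncomputable def erlangCDF (N : ℕ) (t : ℝ) : ℝ := ∫ x in Ioc 0 t, erlangPDF N x

section Erlang

variable {N : ℕ}

lemma erlangPDF_nonneg (N : ℕ) {x : ℝ} (hx : 0 ≤ x) : 0 ≤ erlangPDF N x := by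
  unfold erlangPDF; positivity

lemma erlangPDF_eq_rpow (hN : 1 ≤ N) :
    erlangPDF N = fun x ↦ exp (-x) * x ^ ((N : ℝ) - 1) / (N - 1).factorial := by
  ext x
  rw [erlangPDF, show (N : ℝ) - 1 = ((N - 1 : ℕ) : ℝ) by push_cast [Nat.cast_sub hN]; ring,
    rpow_natCast, mul_comm]

lemma integrableOn_erlangPDF (hN : 1 ≤ N) : IntegrableOn (erlangPDF N) (Ioi 0) := by
  rw [erlangPDF_eq_rpow hN]
  exact (GammaIntegral_convergent (by exact_mod_cast hN)).div_const _

lemma integral_erlangPDF (hN : 1 ≤ N) : ∫ x in Ioi 0, erlangPDF N x = 1 := by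
  have hGamma : Gamma N = (N - 1).factorial := by
    rw [← Gamma_nat_eq_factorial, Nat.cast_sub hN]; simp
  rw [erlangPDF_eq_rpow hN, integral_div, ← Gamma_eq_integral (by positivity), hGamma]
  exact div_self (by positivity)

lemma erlangCDF_add_integral_Ioi (hN : 1 ≤ N) {t : ℝ} (ht : 0 ≤ t) :
    erlangCDF N t + ∫ x in Ioi t, erlangPDF N x = 1 := by
  rw [erlangCDF, ← setIntegral_union (Ioc_disjoint_Ioi le_rfl) measurableSet_Ioi
    ((integrableOn_erlangPDF hN).mono_set Ioc_subset_Ioi_self)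
    ((integrableOn_erlangPDF hN).mono_set (Ioi_subset_Ioi ht)),
    Ioc_union_Ioi_eq_Ioi ht, integral_erlangPDF hN]

lemma erlangCDF_nonneg (N : ℕ) (t : ℝ) : 0 ≤ erlangCDF N t :=
  setIntegral_nonneg measurableSet_Ioc fun _ hx ↦ erlangPDF_nonneg N hx.1.le

lemma monotone_erlangCDF (hN : 1 ≤ N) : Monotone (erlangCDF N) := fun _ _ hst ↦
  setIntegral_mono_set ((integrableOn_erlangPDF hN).mono_set Ioc_subset_Ioi_self)
    ((ae_restrict_mem measurableSet_Ioc).mono fun _ hx ↦ erlangPDF_nonneg N hx.1.le)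
    (Ioc_subset_Ioc_right hst).eventuallyLE

lemma integral_Ioc_pow_pred_div_factorial (hN : 1 ≤ N) {t : ℝ} (ht : 0 ≤ t) :
    ∫ x in Ioc 0 t, x ^ (N - 1) / (N - 1).factorial = t ^ N / N.factorial := by
  obtain ⟨n, rfl⟩ := Nat.exists_eq_add_of_le' hN
  rw [integral_div, ← intervalIntegral.integral_of_le ht, integral_pow, Nat.factorial_succ]
  simp only [Nat.add_sub_cancel, Nat.cast_mul, Nat.cast_succ, ne_eq, Nat.add_eq_zero_iff,
    one_ne_zero, and_false, not_false_eq_true, zero_pow, sub_zero]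
  field_simp

lemma erlangCDF_le (hN : 1 ≤ N) {t : ℝ} (ht : 0 ≤ t) : erlangCDF N t ≤ t ^ N / N.factorial := by
  rw [← integral_Ioc_pow_pred_div_factorial hN ht]
  refine setIntegral_mono_on ((integrableOn_erlangPDF hN).mono_set Ioc_subset_Ioi_self)
    ((continuous_pow _).div_const _).integrableOn_Ioc measurableSet_Ioc fun x hx ↦ ?_
  have : exp (-x) ≤ 1 := exp_le_one_iff.mpr (by linarith [hx.1])
  unfold erlangPDF
  gcongr
  exact mul_le_of_le_one_right (pow_nonneg hx.1.le _) this

lemma exp_neg_mul_le_erlangCDF (hN : 1 ≤ N) {t : ℝ} (ht : 0 ≤ t) :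
    exp (-t) * (t ^ N / N.factorial) ≤ erlangCDF N t := by
  rw [← integral_Ioc_pow_pred_div_factorial hN ht, ← integral_const_mul]
  refine setIntegral_mono_on
    (((continuous_pow _).div_const _).const_mul _).integrableOn_Ioc
    ((integrableOn_erlangPDF hN).mono_set Ioc_subset_Ioi_self) measurableSet_Ioc fun x hx ↦ ?_
  have : exp (-t) ≤ exp (-x) := exp_le_exp.mpr (by linarith [hx.2])
  rw [erlangPDF, mul_div_assoc', mul_comm]
  gcongr
  exact pow_nonneg hx.1.le _

lemma abs_erlangCDF_sub_le (hN : 1 ≤ N) {t : ℝ} (ht : 0 ≤ t) :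
    |erlangCDF N t - t ^ N / N.factorial| ≤ (1 - exp (-t)) * (t ^ N / N.factorial) := by
  rw [abs_sub_comm, abs_of_nonneg (sub_nonneg.mpr (erlangCDF_le hN ht))]
  linarith [exp_neg_mul_le_erlangCDF hN ht]

end Erlang

-- Tonelli over the joint law of `(Y, X)`, which is the product of the marginals.
lemma IndepFun.measure_gt_comp_eq_integral {Ω : Type*} [MeasurableSpace Ω] {μ : Measure Ω}
    [IsFiniteMeasure μ] {X Y : Ω → ℝ} (hX : Measurable X) (hY : Measurable Y)
    (hXY : IndepFun X Y μ) {g : ℝ → ℝ} (hg : Measurable g) :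
    (μ {ω | X ω > g (Y ω)}).toReal = ∫ ω, (μ {ω' | X ω' > g (Y ω)}).toReal ∂μ := by
  have hS : MeasurableSet {p : ℝ × ℝ | g p.1 < p.2} :=
    measurableSet_lt (hg.comp measurable_fst) measurable_snd
  have hsection : ∀ y, μ {ω' | X ω' > g y} = μ.map X (Prod.mk y ⁻¹' {p | g p.1 < p.2}) :=
    fun y ↦ (Measure.map_apply hX (measurable_prodMk_left hS)).symm
  have hmeas : Measurable fun y ↦ μ {ω' | X ω' > g y} := by
    simp_rw [hsection]; exact measurable_measure_prodMk_left hS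
  have hlintegral : μ {ω | X ω > g (Y ω)} = ∫⁻ ω, μ {ω' | X ω' > g (Y ω)} ∂μ := by
    calc μ {ω | X ω > g (Y ω)} = μ.map (fun ω ↦ (Y ω, X ω)) {p | g p.1 < p.2} := by
          rw [Measure.map_apply (hY.prodMk hX) hS]; rfl
      _ = ∫⁻ y, μ {ω' | X ω' > g y} ∂μ.map Y := by
          rw [(indepFun_iff_map_prod_eq_prod_map_map hY.aemeasurable hX.aemeasurable).mp hXY.symm,
            Measure.prod_apply hS]
          simp_rw [hsection]
      _ = ∫⁻ ω, μ {ω' | X ω' > g (Y ω)} ∂μ := lintegral_map hmeas hY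
  rw [hlintegral]
  exact (integral_toReal (hmeas.comp hY).aemeasurable (ae_of_all _ fun _ ↦ measure_lt_top _ _)).symm

section Moment

variable {Ω : Type*} [MeasurableSpace Ω] {μ : Measure Ω} {N : ℕ} {I : Ω → ℝ}

lemma integrable_erlangCDF_mul (hN : 1 ≤ N) (hIm : Measurable I) (hInn : ∀ ω, 0 ≤ I ω)
    (hmom : Integrable (fun ω ↦ I ω ^ N) μ) {a : ℝ} (ha : 0 ≤ a) :
    Integrable (fun ω ↦ erlangCDF N (a * I ω)) μ := by
  refine (hmom.const_mul (a ^ N / N.factorial)).mono'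
    ((monotone_erlangCDF hN).measurable.comp (hIm.const_mul a)).aestronglyMeasurable
    (ae_of_all _ fun ω ↦ ?_)
  rw [norm_of_nonneg (erlangCDF_nonneg N _), div_mul_eq_mul_div, ← mul_pow]
  exact erlangCDF_le hN (mul_nonneg ha (hInn ω))

lemma abs_integral_erlangCDF_mul_sub_le (hN : 1 ≤ N) (hIm : Measurable I)
    (hInn : ∀ ω, 0 ≤ I ω) (hmom : Integrable (fun ω ↦ I ω ^ N) μ) {a : ℝ} (ha : 0 ≤ a) :
    |∫ ω, erlangCDF N (a * I ω) ∂μ - a ^ N * (∫ ω, I ω ^ N ∂μ) / N.factorial|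
      ≤ a ^ N * ((∫ ω, (1 - exp (-(a * I ω))) * I ω ^ N ∂μ) / N.factorial) := by
  have hpow : (fun ω ↦ (a * I ω) ^ N / N.factorial) = fun ω ↦ a ^ N / N.factorial * I ω ^ N := by
    ext ω; rw [mul_pow]; ring
  have hmom' : Integrable (fun ω ↦ (a * I ω) ^ N / N.factorial) μ := by
    rw [hpow]; exact hmom.const_mul _
  have hexp : Integrable (fun ω ↦ (1 - exp (-(a * I ω))) * ((a * I ω) ^ N / N.factorial)) μ := by
    refine hmom'.bdd_mul (c := 1)
      (measurable_const.sub (hIm.const_mul a).neg.exp).aestronglyMeasurable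
      (ae_of_all _ fun ω ↦ ?_)
    have : exp (-(a * I ω)) ≤ 1 := exp_le_one_iff.mpr (by nlinarith [hInn ω])
    rw [norm_of_nonneg (by linarith)]
    linarith [exp_pos (-(a * I ω))]
  calc |∫ ω, erlangCDF N (a * I ω) ∂μ - a ^ N * (∫ ω, I ω ^ N ∂μ) / N.factorial|
      = ‖∫ ω, (erlangCDF N (a * I ω) - (a * I ω) ^ N / N.factorial) ∂μ‖ := by
        rw [integral_sub (integrable_erlangCDF_mul hN hIm hInn hmom ha) hmom', hpow,
          integral_const_mul, Real.norm_eq_abs]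
        ring_nf
    _ ≤ ∫ ω, (1 - exp (-(a * I ω))) * ((a * I ω) ^ N / N.factorial) ∂μ :=
        norm_integral_le_of_norm_le hexp
          (ae_of_all _ fun ω ↦ abs_erlangCDF_sub_le hN (mul_nonneg ha (hInn ω)))
    _ = a ^ N * ((∫ ω, (1 - exp (-(a * I ω))) * I ω ^ N ∂μ) / N.factorial) := by
        rw [← integral_div, ← integral_const_mul]
        congr 1; ext ω; ring

lemma tendsto_integral_one_sub_exp_neg_mul_mul_pow (hIm : Measurable I) (hInn : ∀ ω, 0 ≤ I ω)
    (hmom : Integrable (fun ω ↦ I ω ^ N) μ) :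
    Tendsto (fun a ↦ ∫ ω, (1 - exp (-(a * I ω))) * I ω ^ N ∂μ) (𝓝[>] 0) (𝓝 0) := by
  suffices Tendsto (fun a ↦ ∫ ω, (1 - exp (-(a * I ω))) * I ω ^ N ∂μ) (𝓝[>] 0)
      (𝓝 (∫ _, (0 : ℝ) ∂μ)) by simpa using this
  refine tendsto_integral_filter_of_dominated_convergence (fun ω ↦ I ω ^ N)
    (Eventually.of_forall fun a ↦ ((measurable_const.sub (hIm.const_mul a).neg.exp).mul
      (hIm.pow_const N)).aestronglyMeasurable) ?_ hmom (ae_of_all _ fun ω ↦ ?_)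
  · filter_upwards [self_mem_nhdsWithin] with a ha
    refine ae_of_all _ fun ω ↦ ?_
    have : exp (-(a * I ω)) ≤ 1 := exp_le_one_iff.mpr (by nlinarith [hInn ω, mem_Ioi.mp ha])
    rw [norm_of_nonneg (mul_nonneg (by linarith) (pow_nonneg (hInn ω) N))]
    exact mul_le_of_le_one_left (pow_nonneg (hInn ω) N) (by linarith [exp_pos (-(a * I ω))])
  · have : Continuous fun a : ℝ ↦ (1 - exp (-(a * I ω))) * I ω ^ N := by fun_prop
    simpa using (this.tendsto 0).mono_left nhdsWithin_le_nhds

lemma integral_erlangCDF_mul_sub_isLittleO (hN : 1 ≤ N) (hIm : Measurable I)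
    (hInn : ∀ ω, 0 ≤ I ω) (hmom : Integrable (fun ω ↦ I ω ^ N) μ) :
    (fun a ↦ ∫ ω, erlangCDF N (a * I ω) ∂μ - a ^ N * (∫ ω, I ω ^ N ∂μ) / N.factorial)
      =o[𝓝[>] 0] fun a ↦ a ^ N := by
  have hrem : (fun a ↦ a ^ N * ((∫ ω, (1 - exp (-(a * I ω))) * I ω ^ N ∂μ) / N.factorial))
      =o[𝓝[>] 0] fun a ↦ a ^ N := by
    simpa using (isBigO_refl (fun a : ℝ ↦ a ^ N) _).mul_isLittleO
      ((isLittleO_one_iff ℝ).mpr (by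
        simpa using (tendsto_integral_one_sub_exp_neg_mul_mul_pow hIm hInn hmom).div_const
          (N.factorial : ℝ)))
  refine IsBigO.trans_isLittleO (IsBigO.of_bound' ?_) hrem
  filter_upwards [self_mem_nhdsWithin] with a ha
  exact (abs_integral_erlangCDF_mul_sub_le hN hIm hInn hmom ha.le).trans (le_abs_self _)

end Moment

lemma one_sub_measure_gt_mul_eq_integral_erlangCDF {Ω : Type*} [MeasurableSpace Ω]
    {μ : Measure Ω} [IsProbabilityMeasure μ] {N : ℕ} (hN : 1 ≤ N) {G I : Ω → ℝ}
    (hGm : Measurable G) (hIm : Measurable I) (hInn : ∀ ω, 0 ≤ I ω) (hindep : IndepFun G I μ)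
    (hG : ∀ t : ℝ, 0 ≤ t → (μ {ω | G ω > t}).toReal = ∫ x in Ioi t, erlangPDF N x)
    (hmom : Integrable (fun ω ↦ I ω ^ N) μ) {a : ℝ} (ha : 0 ≤ a) :
    1 - (μ {ω | G ω > a * I ω}).toReal = ∫ ω, erlangCDF N (a * I ω) ∂μ := by
  have hcond : ∀ ω, (μ {ω' | G ω' > a * I ω}).toReal = 1 - erlangCDF N (a * I ω) := fun ω ↦ by
    have hnn := mul_nonneg ha (hInn ω)
    rw [hG _ hnn, ← erlangCDF_add_integral_Ioi hN hnn]
    ring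
  rw [IndepFun.measure_gt_comp_eq_integral hGm hIm hindep (measurable_const_mul a),
    integral_congr_ae (ae_of_all _ hcond),
    integral_sub (integrable_const 1) (integrable_erlangCDF_mul hN hIm hInn hmom ha)]
  simp

lemma HasDerivAt.sub_isEquivalent {f : ℝ → ℝ} {f' x : ℝ} (hf : HasDerivAt f f' x)
    (hf' : f' ≠ 0) : (fun y ↦ f y - f x) ~[𝓝 x] fun y ↦ f' * (y - x) := by
  refine IsLittleO.trans_isBigO ?_ (isBigO_self_const_mul hf' (fun y ↦ y - x) (𝓝 x))
  refine hf.isLittleO.congr_left fun y ↦ ?_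
  simp only [Pi.sub_apply, smul_eq_mul]
  ring

section RateFunction

variable {c : ℝ}

lemma hasDerivAt_two_rpow_mul_sub_one (c : ℝ) :
    HasDerivAt (fun τ : ℝ ↦ (2 : ℝ) ^ (c * τ) - 1) (c * log 2) 0 := by
  simpa [mul_comm] using (((hasDerivAt_id (0 : ℝ)).const_mul c).const_rpow two_pos).sub_const 1

lemma two_rpow_mul_sub_one_isEquivalent (hc : c ≠ 0) :
    (fun τ : ℝ ↦ (2 : ℝ) ^ (c * τ) - 1) ~[𝓝[>] 0] fun τ ↦ c * log 2 * τ := by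
  have := (hasDerivAt_two_rpow_mul_sub_one c).sub_isEquivalent
    (mul_ne_zero hc (log_pos one_lt_two).ne')
  simpa using this.mono nhdsWithin_le_nhds

lemma tendsto_two_rpow_mul_sub_one (hc : 0 < c) :
    Tendsto (fun τ : ℝ ↦ (2 : ℝ) ^ (c * τ) - 1) (𝓝[>] 0) (𝓝[>] 0) := by
  refine tendsto_nhdsWithin_of_tendsto_nhds_of_eventually_within _ ?_ ?_
  · have : Continuous fun τ : ℝ ↦ (2 : ℝ) ^ (c * τ) - 1 :=
      (continuous_const.rpow (continuous_const_mul c) fun _ ↦ Or.inl two_ne_zero).sub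
        continuous_const
    simpa using (this.tendsto 0).mono_left nhdsWithin_le_nhds
  · filter_upwards [self_mem_nhdsWithin] with τ hτ
    exact sub_pos.mpr (one_lt_rpow one_lt_two (mul_pos hc hτ))

end RateFunction

/-- Rate-outage asymptotics with N-fold diversity: for G ~ Gamma(N,1) independent of I ≥ 0
with E[I^N] < ∞ and f(τ) = 2^{cτ} − 1,
1 − Pr(G > f(τ)I) = τ^N (c ln 2)^N E[I^N]/N! + o(τ^N) as τ → 0⁺. -/
theorem stmt12 {Ω : Type*} [MeasurableSpace Ω] (μ : Measure Ω) [IsProbabilityMeasure μ]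
    (N : ℕ) (hN : 1 ≤ N) (c : ℝ) (hc : 0 < c) (G I : Ω → ℝ)
    (hGm : Measurable G) (hIm : Measurable I) (hInn : ∀ ω, 0 ≤ I ω)
    (hindep : IndepFun G I μ)
    (hG : ∀ t : ℝ, 0 ≤ t →
      (μ {ω | G ω > t}).toReal
        = ∫ x in Set.Ioi t, x ^ (N - 1) * Real.exp (-x) / (N - 1).factorial)
    (hmom : Integrable (fun ω => I ω ^ N) μ) :
    (fun τ : ℝ =>
        (1 - (μ {ω | G ω > ((2 : ℝ) ^ (c * τ) - 1) * I ω}).toReal)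
          - τ ^ N * (c * Real.log 2) ^ N * (∫ ω, I ω ^ N ∂μ) / N.factorial)
      =o[nhdsWithin 0 (Set.Ioi 0)] fun τ : ℝ => τ ^ N := by
  set K := (∫ ω, I ω ^ N ∂μ) / N.factorial
  have hf := two_rpow_mul_sub_one_isEquivalent hc.ne'
  have hlin : (fun τ : ℝ ↦ (c * log 2 * τ) ^ N) =O[𝓝[>] 0] fun τ ↦ τ ^ N := by
    simpa only [mul_pow] using isBigO_const_mul_self ((c * log 2) ^ N) (fun τ : ℝ ↦ τ ^ N) _
  have hmoment := (integral_erlangCDF_mul_sub_isLittleO hN hIm hInn hmom).comp_tendsto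
    (tendsto_two_rpow_mul_sub_one hc)
  have hpow := (hf.pow N).isLittleO.const_mul_left K
  refine ((hmoment.trans_isBigO ((hf.pow N).isBigO.trans hlin)).add
    (hpow.trans_isBigO hlin)).congr' ?_ EventuallyEq.rfl
  filter_upwards [tendsto_two_rpow_mul_sub_one hc self_mem_nhdsWithin] with τ hτ
  rw [one_sub_measure_gt_mul_eq_integral_erlangCDF hN hGm hIm hInn hindep hG hmom hτ.le]
  simp only [Function.comp_apply, Pi.sub_apply, Pi.pow_apply, K]
  ring
end

section
/- With G ~ Gamma(N,1) independent of nonnegative I and J where E[(I+J)^N] < ∞ and J > 0 a.s. with E[J^k I^{N-k}] < ∞ and E[J I^{N-1}] > 0, the difference Pr(G > f(τ)I) − Pr(G > f(τ)(I+J)) = Θ(τ^N) as τ → 0⁺, where f(τ) = 2^{cτ} − 1, c > 0. -/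
open MeasureTheory Real Filter ProbabilityTheory Set Topology
open scoped Nat

/-!
Conditioning on `(I, J)`, the gain is `E[F̄(f I) - F̄(f (I + J))]`, where `F̄` is the Gamma(N, 1)
tail. On `(a, b] ⊆ [0, ∞)` the Gamma density is `x^(N-1)/(N-1)!` up to a factor in `[e^(-b), 1]`,
so `F̄ a - F̄ b` lies between `e^(-b)` and `1` times `(b^N - a^N)/N!`. As `f τ / τ → c log 2`,
dominated convergence gives the limit `(c log 2)^N E[(I + J)^N - I^N] / N!`, which is positive
because `(I + J)^N - I^N ≥ J I^(N-1)`.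
-/

noncomputable def gammaDensity (N : ℕ) (x : ℝ) : ℝ :=
  x ^ (N - 1) * exp (-x) / (N - 1)!

lemma integrableOn_gammaDensity_Ioi {N : ℕ} (hN : 1 ≤ N) {a : ℝ} (ha : 0 ≤ a) :
    IntegrableOn (gammaDensity N) (Ioi a) := by
  have hpred : ((N : ℝ) - 1) = ((N - 1 : ℕ) : ℝ) := by push_cast [Nat.cast_sub hN]; ring
  have h := GammaIntegral_convergent (s := (N : ℝ)) (by positivity)
  simp only [hpred, rpow_natCast] at h
  refine (IntegrableOn.congr_fun (h.div_const ((N - 1)! : ℝ)) (fun x _ => ?_)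
    measurableSet_Ioi).mono_set (Ioi_subset_Ioi ha)
  rw [gammaDensity, mul_comm]

lemma setIntegral_Ioc_pow_pred_div_factorial {N : ℕ} (hN : 1 ≤ N) {a b : ℝ} (hab : a ≤ b) :
    ∫ x in Ioc a b, x ^ (N - 1) / (N - 1)! = (b ^ N - a ^ N) / N ! := by
  obtain ⟨n, rfl⟩ : ∃ n, N = n + 1 := ⟨N - 1, by omega⟩
  rw [integral_div, ← intervalIntegral.integral_of_le hab, integral_pow, Nat.factorial_succ]
  push_cast
  field_simp

lemma setIntegral_gammaDensity_Ioc_mem_Icc {N : ℕ} (hN : 1 ≤ N) {a b : ℝ} (ha : 0 ≤ a)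
    (hab : a ≤ b) :
    ∫ x in Ioc a b, gammaDensity N x ∈
      Icc (exp (-b) * ((b ^ N - a ^ N) / N !)) ((b ^ N - a ^ N) / N !) := by
  have hint : IntegrableOn (gammaDensity N) (Ioc a b) :=
    (integrableOn_gammaDensity_Ioi hN ha).mono_set Ioc_subset_Ioi_self
  have hpow : IntegrableOn (fun x : ℝ => x ^ (N - 1) / (N - 1)!) (Ioc a b) :=
    ((continuous_pow _).div_const _).integrableOn_Ioc
  rw [← setIntegral_Ioc_pow_pred_div_factorial hN hab, ← integral_const_mul]
  constructor
  · refine setIntegral_mono_on (hpow.const_mul _) hint measurableSet_Ioc fun x hx => ?_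
    have : exp (-b) ≤ exp (-x) := exp_le_exp.mpr (by linarith [hx.2])
    rw [gammaDensity, mul_div_assoc', mul_comm]
    gcongr
    exact pow_nonneg (ha.trans hx.1.le) _
  · refine setIntegral_mono_on hint hpow measurableSet_Ioc fun x hx => ?_
    have : exp (-x) ≤ 1 := exp_le_one_iff.mpr (by linarith [hx.1])
    rw [gammaDensity]
    gcongr
    calc x ^ (N - 1) * exp (-x) ≤ x ^ (N - 1) * 1 := by
          gcongr; exact pow_nonneg (ha.trans hx.1.le) _
      _ = x ^ (N - 1) := mul_one _

section GammaSurvival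

variable {N : ℕ} {S : ℝ → ℝ}

lemma sub_mem_Icc_of_eq_integral_gammaDensity (hN : 1 ≤ N)
    (hS : ∀ t, 0 ≤ t → S t = ∫ x in Ioi t, gammaDensity N x) {a b : ℝ} (ha : 0 ≤ a)
    (hab : a ≤ b) :
    S a - S b ∈ Icc (exp (-b) * ((b ^ N - a ^ N) / N !)) ((b ^ N - a ^ N) / N !) := by
  rw [hS a ha, hS b (ha.trans hab),
    intervalIntegral.integral_Ioi_sub_Ioi (integrableOn_gammaDensity_Ioi hN ha) hab,
    intervalIntegral.integral_of_le hab]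
  exact setIntegral_gammaDensity_Ioc_mem_Icc hN ha hab

lemma sub_div_pow_mem_Icc_of_eq_integral_gammaDensity (hN : 1 ≤ N)
    (hS : ∀ t, 0 ≤ t → S t = ∫ x in Ioi t, gammaDensity N x) {s τ x y : ℝ} (hs : 0 ≤ s)
    (hτ : 0 < τ) (hx : 0 ≤ x) (hxy : x ≤ y) :
    (S (s * x) - S (s * y)) / τ ^ N ∈
      Icc (exp (-(s * y)) * ((s / τ) ^ N * ((y ^ N - x ^ N) / N !)))
        ((s / τ) ^ N * ((y ^ N - x ^ N) / N !)) := by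
  have h := sub_mem_Icc_of_eq_integral_gammaDensity hN hS (mul_nonneg hs hx)
    (mul_le_mul_of_nonneg_left hxy hs)
  have hscale : (s / τ) ^ N * ((y ^ N - x ^ N) / N !) =
      ((s * y) ^ N - (s * x) ^ N) / N ! / τ ^ N := by
    rw [div_pow, mul_pow, mul_pow]; ring
  rw [hscale, ← mul_div_assoc]
  exact ⟨by gcongr; exact h.1, by gcongr; exact h.2⟩

lemma tendsto_sub_div_pow_of_eq_integral_gammaDensity (hN : 1 ≤ N)
    (hS : ∀ t, 0 ≤ t → S t = ∫ x in Ioi t, gammaDensity N x) {f : ℝ → ℝ} {L : ℝ}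
    (hf : ∀ τ, 0 < τ → 0 ≤ f τ) (hfL : Tendsto (fun τ => f τ / τ) (𝓝[>] 0) (𝓝 L)) {x y : ℝ}
    (hx : 0 ≤ x) (hxy : x ≤ y) :
    Tendsto (fun τ => (S (f τ * x) - S (f τ * y)) / τ ^ N) (𝓝[>] 0)
      (𝓝 (L ^ N * ((y ^ N - x ^ N) / N !))) := by
  have hupper : Tendsto (fun τ => (f τ / τ) ^ N * ((y ^ N - x ^ N) / N !)) (𝓝[>] 0)
      (𝓝 (L ^ N * ((y ^ N - x ^ N) / N !))) := (hfL.pow N).mul_const _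
  have hf0 : Tendsto f (𝓝[>] 0) (𝓝 0) := by
    have h := hfL.mul (tendsto_nhdsWithin_of_tendsto_nhds (tendsto_id (x := 𝓝 (0 : ℝ))))
    rw [mul_zero] at h
    refine h.congr' (eventually_nhdsWithin_of_forall fun τ (hτ : 0 < τ) => ?_)
    simp [div_mul_cancel₀ _ hτ.ne']
  have hlower : Tendsto (fun τ => exp (-(f τ * y)) * ((f τ / τ) ^ N * ((y ^ N - x ^ N) / N !)))
      (𝓝[>] 0) (𝓝 (L ^ N * ((y ^ N - x ^ N) / N !))) := by
    have hexp : Tendsto (fun τ => exp (-(f τ * y))) (𝓝[>] 0) (𝓝 1) := by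
      simpa using ((hf0.mul_const y).neg).rexp
    simpa using hexp.mul hupper
  have hbounds : ∀ᶠ τ in 𝓝[>] 0, (S (f τ * x) - S (f τ * y)) / τ ^ N ∈
      Icc (exp (-(f τ * y)) * ((f τ / τ) ^ N * ((y ^ N - x ^ N) / N !)))
        ((f τ / τ) ^ N * ((y ^ N - x ^ N) / N !)) :=
    eventually_nhdsWithin_of_forall fun τ hτ =>
      sub_div_pow_mem_Icc_of_eq_integral_gammaDensity hN hS (hf τ hτ) hτ hx hxy
  exact tendsto_of_tendsto_of_tendsto_of_le_of_le' hlower hupper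
    (hbounds.mono fun _ h => h.1) (hbounds.mono fun _ h => h.2)

lemma tendsto_integral_sub_div_pow_of_eq_integral_gammaDensity {Ω : Type*} [MeasurableSpace Ω]
    {μ : Measure Ω} (hN : 1 ≤ N) (hS : ∀ t, 0 ≤ t → S t = ∫ x in Ioi t, gammaDensity N x)
    (hSm : Measurable S) {f : ℝ → ℝ} {L : ℝ} (hf : ∀ τ, 0 < τ → 0 ≤ f τ)
    (hfL : Tendsto (fun τ => f τ / τ) (𝓝[>] 0) (𝓝 L)) {X Y : Ω → ℝ} (hX : Measurable X)
    (hY : Measurable Y) (hX0 : ∀ ω, 0 ≤ X ω) (hXY : ∀ ω, X ω ≤ Y ω)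
    (hint : Integrable (fun ω => Y ω ^ N - X ω ^ N) μ) :
    Tendsto (fun τ => ∫ ω, (S (f τ * X ω) - S (f τ * Y ω)) / τ ^ N ∂μ) (𝓝[>] 0)
      (𝓝 (∫ ω, L ^ N * ((Y ω ^ N - X ω ^ N) / N !) ∂μ)) := by
  have hslope : ∀ᶠ τ in 𝓝[>] 0, f τ / τ ≤ L + 1 := hfL.eventually_le_const (lt_add_one L)
  refine tendsto_integral_filter_of_dominated_convergence
    (fun ω => (L + 1) ^ N * ((Y ω ^ N - X ω ^ N) / N !)) (Eventually.of_forall fun τ => ?_) ?_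
    ((hint.div_const _).const_mul _) (ae_of_all _ fun ω =>
      tendsto_sub_div_pow_of_eq_integral_gammaDensity hN hS hf hfL (hX0 ω) (hXY ω))
  · exact (((hSm.comp (measurable_const.mul hX)).sub
      (hSm.comp (measurable_const.mul hY))).div_const _).aestronglyMeasurable
  filter_upwards [hslope, self_mem_nhdsWithin] with τ hτL (hτ : 0 < τ)
  refine ae_of_all _ fun ω => ?_
  have h := sub_div_pow_mem_Icc_of_eq_integral_gammaDensity hN hS (hf τ hτ) hτ (hX0 ω) (hXY ω)
  have hfτ : 0 ≤ f τ / τ := div_nonneg (hf τ hτ) hτ.le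
  have hD : 0 ≤ (Y ω ^ N - X ω ^ N) / N ! :=
    div_nonneg (sub_nonneg.2 (pow_le_pow_left₀ (hX0 ω) (hXY ω) N)) (by positivity)
  have hlow : 0 ≤ exp (-(f τ * Y ω)) * ((f τ / τ) ^ N * ((Y ω ^ N - X ω ^ N) / N !)) := by
    positivity
  rw [Real.norm_eq_abs, abs_of_nonneg (hlow.trans h.1)]
  exact h.2.trans (by gcongr)

end GammaSurvival

lemma ProbabilityTheory.IndepFun.measureReal_mul_lt {Ω : Type*} [MeasurableSpace Ω]
    {μ : Measure Ω} [IsFiniteMeasure μ] {X G : Ω → ℝ} (hX : Measurable X) (hG : Measurable G)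
    (hXG : IndepFun X G μ) (t : ℝ) :
    μ.real {ω | t * X ω < G ω} = ∫ ω, μ.real {ω' | t * X ω < G ω'} ∂μ := by
  have hs : MeasurableSet {p : ℝ × ℝ | t * p.1 < p.2} :=
    measurableSet_lt (measurable_const.mul measurable_fst) measurable_snd
  have htail : Antitone fun a => μ {ω | a < G ω} :=
    fun a b hab => measure_mono fun ω (h : b < G ω) => hab.trans_lt h
  have hmeas : Measurable fun ω => μ {ω' | t * X ω < G ω'} :=
    htail.measurable.comp (hX.const_mul t)
  have hlaw : μ {ω | t * X ω < G ω} = ∫⁻ ω, μ {ω' | t * X ω < G ω'} ∂μ := by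
    calc μ {ω | t * X ω < G ω}
        = ((μ.map X).prod (μ.map G)) {p | t * p.1 < p.2} := by
          rw [← hXG.map_prod_eq_prod_map_map hX.aemeasurable hG.aemeasurable,
            Measure.map_apply (hX.prodMk hG) hs]
          rfl
      _ = ∫⁻ x, μ.map G {g | t * x < g} ∂(μ.map X) := Measure.prod_apply hs
      _ = ∫⁻ x, μ {ω' | t * x < G ω'} ∂(μ.map X) :=
          lintegral_congr fun x => Measure.map_apply hG measurableSet_Ioi
      _ = ∫⁻ ω, μ {ω' | t * X ω < G ω'} ∂μ :=
          lintegral_map (htail.measurable.comp (measurable_const_mul t)) hX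
  rw [measureReal_def, hlaw,
    ← integral_toReal hmeas.aemeasurable (ae_of_all _ fun _ => measure_lt_top _ _)]
  rfl

lemma tendsto_rpow_mul_sub_one_div {b : ℝ} (hb : 0 < b) (c : ℝ) :
    Tendsto (fun τ => (b ^ (c * τ) - 1) / τ) (𝓝[>] 0) (𝓝 (c * log b)) := by
  have hderiv : HasDerivAt (fun τ => b ^ (c * τ)) (b ^ (c * 0) * log b * c) 0 :=
    ((hasDerivAt_id 0).const_mul c).const_rpow hb |>.congr_deriv (by simp)
  have h := (hasDerivAt_iff_tendsto_slope.mp hderiv).mono_left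
    (nhdsWithin_mono 0 fun τ (hτ : 0 < τ) => hτ.ne')
  simp only [mul_zero, rpow_zero, one_mul] at h
  rw [mul_comm]
  exact h.congr fun τ => by simp [slope_def_field]

lemma mul_pow_pred_le_add_pow_sub_pow {N : ℕ} (hN : 1 ≤ N) {x y : ℝ} (hx : 0 ≤ x) (hy : 0 ≤ y) :
    y * x ^ (N - 1) ≤ (x + y) ^ N - x ^ N := by
  obtain ⟨n, rfl⟩ : ∃ n, N = n + 1 := ⟨N - 1, by omega⟩
  have : x ^ n ≤ (x + y) ^ n := pow_le_pow_left₀ hx (le_add_of_nonneg_right hy) n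
  simp only [add_tsub_cancel_right, pow_succ]
  nlinarith [mul_le_mul_of_nonneg_right this (add_nonneg hx hy)]

theorem stmt13_general {Ω : Type*} [MeasurableSpace Ω] (μ : Measure Ω) [IsProbabilityMeasure μ]
    (N : ℕ) (hN : 1 ≤ N) (c : ℝ) (hc : 0 < c) (G I J : Ω → ℝ)
    (hGm : Measurable G) (hIm : Measurable I) (hJm : Measurable J)
    (hInn : ∀ ω, 0 ≤ I ω) (hJnn : ∀ ω, 0 ≤ J ω)
    (hindep : IndepFun G (fun ω => (I ω, J ω)) μ)
    (hG : ∀ t : ℝ, 0 ≤ t →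
      (μ {ω | G ω > t}).toReal
        = ∫ x in Set.Ioi t, x ^ (N - 1) * Real.exp (-x) / (N - 1).factorial)
    (hmomIJ : Integrable (fun ω => (I ω + J ω) ^ N) μ)
    (hmomk : ∀ k ≤ N, Integrable (fun ω => J ω ^ k * I ω ^ (N - k)) μ)
    (hpos : 0 < ∫ ω, J ω * I ω ^ (N - 1) ∂μ) :
    ∃ K : ℝ, 0 < K ∧
      Filter.Tendsto (fun τ : ℝ =>
          ((μ {ω | G ω > ((2 : ℝ) ^ (c * τ) - 1) * I ω}).toReal
            - (μ {ω | G ω > ((2 : ℝ) ^ (c * τ) - 1) * (I ω + J ω)}).toReal) / τ ^ N)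
        (nhdsWithin 0 (Set.Ioi 0)) (nhds K) := by
  set S : ℝ → ℝ := fun t => μ.real {ω | t < G ω}
  have hS : ∀ t, 0 ≤ t → S t = ∫ x in Ioi t, gammaDensity N x := hG
  have hSm : Measurable S :=
    Antitone.measurable fun a b hab => measureReal_mono fun ω (h : b < G ω) => hab.trans_lt h
  have hSint : ∀ t {X : Ω → ℝ}, Measurable X → Integrable (fun ω => S (t * X ω)) μ :=
    fun t X hX => .of_bound (hSm.comp (hX.const_mul t)).aestronglyMeasurable 1
      (ae_of_all _ fun ω => by rw [norm_of_nonneg measureReal_nonneg]; exact measureReal_le_one)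
  have hf : ∀ τ : ℝ, 0 < τ → 0 ≤ (2 : ℝ) ^ (c * τ) - 1 :=
    fun τ hτ => sub_nonneg.2 (one_le_rpow one_le_two (by positivity))
  have hIJ : Integrable (fun ω => (I ω + J ω) ^ N - I ω ^ N) μ :=
    hmomIJ.sub (by simpa using hmomk 0 N.zero_le)
  have hlim := tendsto_integral_sub_div_pow_of_eq_integral_gammaDensity
    (Y := fun ω => I ω + J ω) hN hS hSm hf (tendsto_rpow_mul_sub_one_div two_pos c) hIm
    (hIm.add hJm) hInn (fun ω => le_add_of_nonneg_right (hJnn ω)) hIJ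
  refine ⟨_, ?_, hlim.congr' (eventually_nhdsWithin_of_forall fun τ _ => ?_)⟩
  · have hA : ∫ ω, J ω * I ω ^ (N - 1) ∂μ ≤ ∫ ω, (I ω + J ω) ^ N - I ω ^ N ∂μ :=
      integral_mono (by simpa using hmomk 1 hN) hIJ
        fun ω => mul_pow_pred_le_add_pow_sub_pow hN (hInn ω) (hJnn ω)
    have hL : 0 < c * log 2 := mul_pos hc (log_pos one_lt_two)
    rw [integral_const_mul, integral_div]
    exact mul_pos (pow_pos hL N) (div_pos (hpos.trans_le hA) (by positivity))
  · have hindI : IndepFun I G μ := (hindep.comp measurable_id measurable_fst).symm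
    have hindIJ : IndepFun (fun ω => I ω + J ω) G μ :=
      (hindep.comp measurable_id (measurable_fst.add measurable_snd)).symm
    change _ = (μ.real {ω | (2 ^ (c * τ) - 1) * I ω < G ω}
      - μ.real {ω | (2 ^ (c * τ) - 1) * (I ω + J ω) < G ω}) / τ ^ N
    rw [hindI.measureReal_mul_lt hIm hGm,
      hindIJ.measureReal_mul_lt (X := fun ω => I ω + J ω) (hIm.add hJm) hGm, integral_div,
      integral_sub (hSint _ hIm) (hSint _ (X := fun ω => I ω + J ω) (hIm.add hJm))]

/-- The coverage gain from nulling the dominant interferer J is Θ(τ^N):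
Pr(G > f(τ)I) − Pr(G > f(τ)(I+J)) = Θ(τ^N) as τ → 0⁺, with f(τ) = 2^{cτ} − 1. -/
theorem stmt13 {Ω : Type*} [MeasurableSpace Ω] (μ : Measure Ω) [IsProbabilityMeasure μ]
    (N : ℕ) (hN : 1 ≤ N) (c : ℝ) (hc : 0 < c) (G I J : Ω → ℝ)
    (hGm : Measurable G) (hIm : Measurable I) (hJm : Measurable J)
    (hInn : ∀ ω, 0 ≤ I ω) (hJnn : ∀ ω, 0 ≤ J ω) (hJpos : ∀ᵐ ω ∂μ, 0 < J ω)
    (hindep : IndepFun G (fun ω => (I ω, J ω)) μ)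
    (hG : ∀ t : ℝ, 0 ≤ t →
      (μ {ω | G ω > t}).toReal
        = ∫ x in Set.Ioi t, x ^ (N - 1) * Real.exp (-x) / (N - 1).factorial)
    (hmomIJ : Integrable (fun ω => (I ω + J ω) ^ N) μ)
    (hmomk : ∀ k ≤ N, Integrable (fun ω => J ω ^ k * I ω ^ (N - k)) μ)
    (hpos : 0 < ∫ ω, J ω * I ω ^ (N - 1) ∂μ) :
    ∃ K : ℝ, 0 < K ∧
      Filter.Tendsto (fun τ : ℝ =>
          ((μ {ω | G ω > ((2 : ℝ) ^ (c * τ) - 1) * I ω}).toReal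
            - (μ {ω | G ω > ((2 : ℝ) ^ (c * τ) - 1) * (I ω + J ω)}).toReal) / τ ^ N)
        (nhdsWithin 0 (Set.Ioi 0)) (nhds K) :=
  stmt13_general μ N hN c hc G I J hGm hIm hJm hInn hJnn hindep hG hmomIJ hmomk hpos
end

section
/- Define the association probability 𝒜₂ = 2πλ₂ ∫_0^∞ z exp(−π(λ₁(P₁ z^{α₂}/(B P₂))^{2/α₁} + λ₂ z²)) dz. If α₁ = α₂ = α, then 𝒜₂ = λ₂(BP₂/P₁)^{2/α} / (λ₁ + λ₂(BP₂/P₁)^{2/α}). -/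
open MeasureTheory Real

/-! With equal exponents the biased macro-tier interference term is itself quadratic in `z`:
`λ₁ (P₁ z^α / (B P₂))^{2/α} = λ₁ z² / k` with `k = (B P₂ / P₁)^{2/α}`. The integrand is therefore
`z exp(-π (λ₁ / k + λ₂) z²)`, whose integral over `(0, ∞)` is `1 / (2π (λ₁ / k + λ₂))`. -/

theorem integral_mul_exp_neg_mul_sq {b : ℝ} (hb : 0 < b) :
    ∫ x in Set.Ioi (0 : ℝ), x * exp (-b * x ^ 2) = (2 * b)⁻¹ := by
  have h := integral_rpow_mul_exp_neg_mul_rpow two_pos (by norm_num : (-1 : ℝ) < 1) hb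
  simp only [rpow_one, rpow_two] at h
  rw [h]
  norm_num [rpow_neg_one]

theorem mul_rpow_div_rpow_div {a b z : ℝ} (ha : 0 ≤ a) (hb : 0 ≤ b) (hz : 0 ≤ z) {α : ℝ}
    (hα : α ≠ 0) (p : ℝ) :
    (a * z ^ α / b) ^ (p / α) = z ^ p / (b / a) ^ (p / α) := by
  rw [div_rpow (by positivity) hb, mul_rpow ha (by positivity), ← rpow_mul hz,
    mul_div_cancel₀ p hα, div_rpow hb ha]
  field_simp

/-- Pico-tier association probability with equal path loss exponents:
𝒜₂ = 2πλ₂ ∫_0^∞ z exp(−π(λ₁(P₁z^α/(BP₂))^{2/α} + λ₂z²)) dz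
   = λ₂(BP₂/P₁)^{2/α}/(λ₁ + λ₂(BP₂/P₁)^{2/α}). -/
theorem stmt14 (lam1 lam2 P1 P2 B α : ℝ) (h1 : 0 < lam1) (h2 : 0 < lam2)
    (hP1 : 0 < P1) (hP2 : 0 < P2) (hB : 1 < B) (hα : 2 < α) :
    2 * π * lam2 * ∫ z in Set.Ioi (0 : ℝ),
        z * Real.exp (-(π * (lam1 * (P1 * z ^ α / (B * P2)) ^ (2 / α) + lam2 * z ^ 2)))
      = lam2 * (B * P2 / P1) ^ (2 / α) / (lam1 + lam2 * (B * P2 / P1) ^ (2 / α)) := by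
  set k := (B * P2 / P1) ^ (2 / α) with hk_def
  have hk : 0 < k := by positivity
  have hintegrand : ∀ z ∈ Set.Ioi (0 : ℝ),
      z * exp (-(π * (lam1 * (P1 * z ^ α / (B * P2)) ^ (2 / α) + lam2 * z ^ 2)))
        = z * exp (-(π * (lam1 / k + lam2)) * z ^ 2) := by
    intro z hz
    rw [mul_rpow_div_rpow_div hP1.le (by positivity) (le_of_lt hz) (by positivity), rpow_two,
      ← hk_def]
    ring_nf
  rw [setIntegral_congr_fun measurableSet_Ioi hintegrand,
    integral_mul_exp_neg_mul_sq (by positivity)]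
  field_simp
end

section
/- With equal path loss exponents α₁ = α₂ = α, the offloading probability 𝒜_{2O} = 2πλ₂ ∫_0^∞ z (exp(−πλ₁(P₁z^α/(BP₂))^{2/α}) − exp(−πλ₁(P₁z^α/P₂)^{2/α})) exp(−πλ₂z²) dz equals λ₂(BP₂/P₁)^{2/α}/(λ₁ + λ₂(BP₂/P₁)^{2/α}) − λ₂(P₂/P₁)^{2/α}/(λ₁ + λ₂(P₂/P₁)^{2/α}). -/
/-! With equal path loss exponents, `(r z^α)^(2/α) = r^(2/α) z²` for `z > 0`, so each of the two
exponentials merges with the Gaussian factor into `z e^{-c z²}` with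
`c = π (λ₁ r^(2/α) + λ₂)`, and `∫₀^∞ z e^{-c z²} dz = 1/(2c)`. -/

open MeasureTheory Real

theorem integral_Ioi_mul_exp_neg_mul_sq {b : ℝ} (hb : 0 < b) :
    ∫ z in Set.Ioi (0 : ℝ), z * exp (-b * z ^ 2) = (2 * b)⁻¹ := by
  rw [← Complex.ofReal_inj, ← integral_complex_ofReal]
  push_cast
  exact integral_mul_cexp_neg_mul_sq (by simpa using hb)

theorem mul_rpow_rpow_div {a z α : ℝ} (ha : 0 ≤ a) (hz : 0 ≤ z) (hα : α ≠ 0) (β : ℝ) :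
    (a * z ^ α) ^ (β / α) = a ^ (β / α) * z ^ β := by
  rw [mul_rpow ha (rpow_nonneg hz α), ← rpow_mul hz, mul_div_cancel₀ β hα]

section Tier

variable {lam1 lam2 r α : ℝ}

theorem eqOn_mul_exp_neg_rpow_mul_exp_neg_sq (hr : 0 ≤ r) (hα : α ≠ 0) :
    Set.EqOn (fun z => z * exp (-(π * lam1 * (r * z ^ α) ^ (2 / α))) * exp (-(π * lam2 * z ^ 2)))
      (fun z => z * exp (-(π * (lam1 * r ^ (2 / α) + lam2)) * z ^ 2)) (Set.Ioi 0) := by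
  intro z hz
  simp only
  rw [mul_rpow_rpow_div hr (le_of_lt hz) hα, rpow_two, mul_assoc, ← exp_add]
  ring_nf

theorem integrableOn_mul_exp_neg_rpow_mul_exp_neg_sq (h1 : 0 ≤ lam1) (h2 : 0 < lam2)
    (hr : 0 ≤ r) (hα : α ≠ 0) :
    IntegrableOn (fun z => z * exp (-(π * lam1 * (r * z ^ α) ^ (2 / α))) * exp (-(π * lam2 * z ^ 2)))
      (Set.Ioi 0) :=
  ((integrable_mul_exp_neg_mul_sq (by positivity)).integrableOn).congr_fun
    (eqOn_mul_exp_neg_rpow_mul_exp_neg_sq hr hα).symm measurableSet_Ioi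

theorem two_pi_mul_integral_mul_exp_neg_rpow_mul_exp_neg_sq (h1 : 0 ≤ lam1) (h2 : 0 < lam2)
    (hr : 0 < r) (hα : α ≠ 0) :
    2 * π * lam2 * ∫ z in Set.Ioi (0 : ℝ),
        z * exp (-(π * lam1 * (r * z ^ α) ^ (2 / α))) * exp (-(π * lam2 * z ^ 2))
      = lam2 * r⁻¹ ^ (2 / α) / (lam1 + lam2 * r⁻¹ ^ (2 / α)) := by
  have hs : 0 < r ^ (2 / α) := rpow_pos_of_pos hr _
  rw [setIntegral_congr_fun measurableSet_Ioi (eqOn_mul_exp_neg_rpow_mul_exp_neg_sq hr.le hα),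
    integral_Ioi_mul_exp_neg_mul_sq (by positivity), inv_rpow hr.le]
  field_simp

end Tier

/-- Offloading probability with equal path loss exponents:
𝒜_{2O} = 2πλ₂ ∫_0^∞ z (e^{−πλ₁(P₁z^α/(BP₂))^{2/α}} − e^{−πλ₁(P₁z^α/P₂)^{2/α}}) e^{−πλ₂z²} dz
 = λ₂(BP₂/P₁)^{2/α}/(λ₁+λ₂(BP₂/P₁)^{2/α}) − λ₂(P₂/P₁)^{2/α}/(λ₁+λ₂(P₂/P₁)^{2/α}). -/
theorem stmt15 (lam1 lam2 P1 P2 B α : ℝ) (h1 : 0 < lam1) (h2 : 0 < lam2)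
    (hP1 : 0 < P1) (hP2 : 0 < P2) (hB : 1 < B) (hα : 2 < α) :
    2 * π * lam2 * ∫ z in Set.Ioi (0 : ℝ),
        z * (Real.exp (-(π * lam1 * (P1 * z ^ α / (B * P2)) ^ (2 / α)))
              - Real.exp (-(π * lam1 * (P1 * z ^ α / P2) ^ (2 / α))))
          * Real.exp (-(π * lam2 * z ^ 2))
      = lam2 * (B * P2 / P1) ^ (2 / α) / (lam1 + lam2 * (B * P2 / P1) ^ (2 / α))
          - lam2 * (P2 / P1) ^ (2 / α) / (lam1 + lam2 * (P2 / P1) ^ (2 / α)) := by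
  have hα0 : α ≠ 0 := by positivity
  simp_rw [mul_div_right_comm P1, mul_sub, sub_mul]
  rw [integral_sub
      (integrableOn_mul_exp_neg_rpow_mul_exp_neg_sq h1.le h2 (by positivity) hα0)
      (integrableOn_mul_exp_neg_rpow_mul_exp_neg_sq h1.le h2 (by positivity) hα0),
    mul_sub,
    two_pi_mul_integral_mul_exp_neg_rpow_mul_exp_neg_sq h1.le h2 (by positivity) hα0,
    two_pi_mul_integral_mul_exp_neg_rpow_mul_exp_neg_sq h1.le h2 (by positivity) hα0,
    inv_div, inv_div]
end
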